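/- arXiv:math/0511250 — 5 statements merged into one kernel-verified Lean document; each statement's English description precedes it below -/
import Mathlib

section
/- Let L : ℂ^n → ℂ^n be a linear mapping and let M > 1 be a positive integer. Then L has a periodic point of period M if and only if there exist a positive integer s ≤ n and positive integers m_1, …, m_s such that M = [m_1, …, m_s] and L has eigenvalues λ_1, …, λ_s such that each λ_i is a primitive m_i-th root of unity. -/
open Function

noncomputable section

/-- `lam` is a primitive `m`-th root of unity. -/
def PrimRoot (lam : ℂ) (m : ℕ) : Prop :=
  lam ^ m = 1 ∧ ∀ j : ℕ, 1 ≤ j → j < m → lam ^ j ≠ 1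

/-- `p` is a periodic point of `f` of (exact) period `m`. -/
def PeriodicPtOfPeriod {X : Type*} (f : X → X) (m : ℕ) (p : X) : Prop :=
  f^[m] p = p ∧ ∀ k : ℕ, 0 < k → k < m → f^[k] p ≠ p

/-!
A vector `p` with `L^M p = p` lies in the kernel of `L^M - 1`, on which `L` is annihilated by the
separable polynomial `X^M - 1` and hence is diagonalisable; so `p` is a sum of eigenvectors `u_μ`
with distinct eigenvalues `μ`. As `L^k p = ∑ μ^k u_μ` and such eigenvectors are linearly
independent, `L^k p = p` exactly when `μ^k = 1` for all `μ`: the minimal period of `p` is the lcm of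
the orders of its eigenvalues. Conversely, adding up one eigenvector for each prescribed eigenvalue
gives a point whose period is that lcm, and there are at most `n` distinct eigenvalues.
-/

theorem periodicPtOfPeriod_iff_minimalPeriod_eq {X : Type*} {f : X → X} {m : ℕ} {p : X}
    (hm : 0 < m) : PeriodicPtOfPeriod f m p ↔ minimalPeriod f p = m := by
  constructor
  · rintro ⟨hp, hmin⟩
    have hper : IsPeriodicPt f m p := hp
    refine (hper.minimalPeriod_le hm).antisymm (not_lt.mp fun hlt => ?_)
    exact hmin _ (hper.minimalPeriod_pos hm) hlt iterate_minimalPeriod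
  · rintro rfl
    exact ⟨iterate_minimalPeriod, fun k hk hlt =>
      not_isPeriodicPt_of_pos_of_lt_minimalPeriod hk.ne' hlt⟩

theorem primRoot_iff_orderOf_eq {lam : ℂ} {m : ℕ} (hm : 0 < m) :
    PrimRoot lam m ↔ orderOf lam = m := by
  rw [orderOf_eq_iff hm, PrimRoot]
  exact and_congr_right' ⟨fun h j hj hj0 => h j hj0 hj, fun h j hj0 hj => h j hj hj0⟩

theorem Finset.image_univ_equivFin_symm {α : Type*} [DecidableEq α] (T : Finset α) :
    Finset.univ.image (fun i => (T.equivFin.symm i : α)) = T := by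
  ext a
  simpa using ⟨fun ⟨i, h⟩ => h ▸ (T.equivFin.symm i).2, fun h => ⟨T.equivFin ⟨a, h⟩, by simp⟩⟩

namespace Module.End

variable {K V : Type*} [Field K] [AddCommGroup V] [Module K V] {f : End K V}
  {T : Finset K} {u : K → V}

theorem isPeriodicPt_sum_iff_of_hasEigenvector (hu : ∀ μ ∈ T, f.HasEigenvector μ (u μ))
    (k : ℕ) : IsPeriodicPt f k (∑ μ ∈ T, u μ) ↔ ∀ μ ∈ T, μ ^ k = 1 := by
  have hpow : (f ^ k) (∑ μ ∈ T, u μ) - ∑ μ ∈ T, u μ = ∑ μ ∈ T, (μ ^ k - 1) • u μ := by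
    simp only [map_sum, sub_smul, one_smul, Finset.sum_sub_distrib]
    exact congrArg (· - _) (Finset.sum_congr rfl fun μ hμ => (hu μ hμ).pow_apply k)
  have hindep := (iSupIndep_iff_finsetSum_eq_zero_imp_eq_zero _).mp f.eigenspaces_iSupIndep T
    (fun μ => (μ ^ k - 1) • u μ) fun μ hμ => Submodule.smul_mem _ _ (hu μ hμ).1
  rw [IsPeriodicPt, IsFixedPt, ← coe_pow, ← sub_eq_zero, hpow]
  constructor
  · intro h μ hμ
    have hμu : (μ ^ k - 1) • u μ = 0 := hindep h μ hμ
    exact sub_eq_zero.mp ((smul_eq_zero.mp hμu).resolve_right (hu μ hμ).2)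
  · intro h
    exact Finset.sum_eq_zero fun μ hμ => by rw [h μ hμ, sub_self, zero_smul]

theorem minimalPeriod_sum_of_hasEigenvector (hu : ∀ μ ∈ T, f.HasEigenvector μ (u μ)) :
    minimalPeriod f (∑ μ ∈ T, u μ) = T.lcm orderOf :=
  Nat.dvd_right_iff_eq.mp fun k => by
    simp only [← isPeriodicPt_iff_minimalPeriod_dvd, isPeriodicPt_sum_iff_of_hasEigenvector hu,
      Finset.lcm_dvd_iff, orderOf_dvd_iff_pow_eq_one]

theorem exists_sum_hasEigenvector_of_mem_iSup_eigenspace {x : V}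
    (hx : x ∈ ⨆ μ, f.eigenspace μ) :
    ∃ (T : Finset K) (u : K → V), (∀ μ ∈ T, f.HasEigenvector μ (u μ)) ∧ ∑ μ ∈ T, u μ = x := by
  obtain ⟨u, hu, rfl⟩ := (Submodule.mem_iSup_iff_exists_finsupp _ x).mp hx
  exact ⟨u.support, u, fun μ hμ => ⟨hu μ, Finsupp.mem_support_iff.mp hμ⟩, rfl⟩

open Polynomial in
theorem mem_iSup_eigenspace_of_pow_apply_eq_self [IsAlgClosed K] [FiniteDimensional K V]
    {M : ℕ} (hM : (M : K) ≠ 0) {x : V} (hx : (f ^ M) x = x) : x ∈ ⨆ μ, f.eigenspace μ := by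
  set W := LinearMap.ker (f ^ M - 1)
  have hW : ∀ w ∈ W, f w ∈ W := fun w hw => by
    have hcomm : (f ^ M - 1) * f = f * (f ^ M - 1) :=
      ((Commute.self_pow f M).symm.sub_left (Commute.one_left f)).eq
    rw [LinearMap.mem_ker] at hw ⊢
    rw [← mul_apply, hcomm, mul_apply, hw, map_zero]
  have hg : aeval (f.restrict hW) (X ^ M - C 1 : K[X]) = 0 := by
    ext ⟨w, hw⟩
    have hw' : (f ^ M) w = w := sub_eq_zero.mp hw
    simp only [map_sub, map_pow, aeval_X, map_one, pow_restrict M hW, LinearMap.sub_apply,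
      LinearMap.restrict_apply, one_apply, hw', sub_self, LinearMap.zero_apply]
  have hss := isSemisimple_of_squarefree_aeval_eq_zero
    (Polynomial.separable_X_pow_sub_C 1 hM one_ne_zero).squarefree hg
  have hxW : (⟨x, by simp [W, hx]⟩ : W) ∈ ⨆ μ, eigenspace (f.restrict hW) μ := by
    rw [hss.iSup_eigenspace_eq_top]
    exact Submodule.mem_top
  have := Submodule.mem_map_of_mem (f := W.subtype) hxW
  rw [Submodule.map_iSup] at this
  exact iSup_mono (f.eigenspace_restrict_le_eigenspace hW) this

theorem card_le_finrank_of_forall_hasEigenvalue [FiniteDimensional K V]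
    (hT : ∀ μ ∈ T, f.HasEigenvalue μ) : T.card ≤ Module.finrank K V := by
  choose! u hu using fun μ hμ => (hT μ hμ).exists_hasEigenvector
  have hindep : LinearIndependent K (fun μ : T => u μ) :=
    f.eigenvectors_linearIndependent' _ Subtype.coe_injective _ fun μ => hu μ μ.2
  simpa using hindep.fintype_card_le_finrank

theorem exists_minimalPeriod_eq_iff [IsAlgClosed K] [FiniteDimensional K V] {M : ℕ}
    (hM : (M : K) ≠ 0) :
    (∃ x, minimalPeriod f x = M) ↔
      ∃ T : Finset K, (∀ μ ∈ T, f.HasEigenvalue μ) ∧ T.lcm orderOf = M := by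
  constructor
  · rintro ⟨x, hx⟩
    have hxM : (f ^ M) x = x := by rw [coe_pow, ← hx]; exact iterate_minimalPeriod
    obtain ⟨T, u, hu, rfl⟩ := exists_sum_hasEigenvector_of_mem_iSup_eigenspace
      (mem_iSup_eigenspace_of_pow_apply_eq_self hM hxM)
    exact ⟨T, fun μ hμ => hasEigenvalue_of_hasEigenvector (hu μ hμ),
      (minimalPeriod_sum_of_hasEigenvector hu).symm.trans hx⟩
  · rintro ⟨T, hT, rfl⟩
    choose! u hu using fun μ hμ => (hT μ hμ).exists_hasEigenvector
    exact ⟨_, minimalPeriod_sum_of_hasEigenvector hu⟩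

end Module.End

open Module.End in
theorem statement3 (n M : ℕ) (hM : 1 < M)
    (L : EuclideanSpace ℂ (Fin n) →ₗ[ℂ] EuclideanSpace ℂ (Fin n)) :
    (∃ p : EuclideanSpace ℂ (Fin n), PeriodicPtOfPeriod (fun x => L x) M p) ↔
      ∃ s : ℕ, 0 < s ∧ s ≤ n ∧ ∃ m : Fin s → ℕ,
        (∀ i, 0 < m i) ∧ Finset.univ.lcm m = M ∧
        ∃ lam : Fin s → ℂ, ∀ i,
          Module.End.HasEigenvalue L (lam i) ∧ PrimRoot (lam i) (m i) := by
  classical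
  have hM0 : 0 < M := zero_lt_one.trans hM
  show (∃ p, PeriodicPtOfPeriod L M p) ↔ _
  simp_rw [periodicPtOfPeriod_iff_minimalPeriod_eq hM0,
    exists_minimalPeriod_eq_iff (Nat.cast_ne_zero.mpr hM0.ne')]
  constructor
  · rintro ⟨T, hT, hlcm⟩
    have horder : ∀ μ ∈ T, 0 < orderOf μ := fun μ hμ =>
      Nat.pos_of_dvd_of_pos (hlcm ▸ Finset.dvd_lcm hμ) hM0
    have hne : T.Nonempty := Finset.nonempty_iff_ne_empty.mpr fun h => by simp [h] at hlcm; omega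
    set lam := fun i : Fin T.card => (T.equivFin.symm i : ℂ)
    have hlam : ∀ i, lam i ∈ T := fun i => (T.equivFin.symm i).2
    refine ⟨T.card, hne.card_pos,
      (card_le_finrank_of_forall_hasEigenvalue hT).trans finrank_euclideanSpace_fin.le,
      fun i => orderOf (lam i), fun i => horder _ (hlam i),
      (Finset.lcm_image _).symm.trans (by rw [T.image_univ_equivFin_symm, hlcm]), lam,
      fun i => ⟨hT _ (hlam i), (primRoot_iff_orderOf_eq (horder _ (hlam i))).mpr rfl⟩⟩
  · rintro ⟨s, -, -, m, hm, hlcm, lam, hlam⟩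
    refine ⟨Finset.univ.image lam, by simpa using fun i => (hlam i).1, ?_⟩
    rw [Finset.lcm_image, ← hlcm]
    exact congrArg _ (funext fun i => (primRoot_iff_orderOf_eq (hm i)).mp (hlam i).2)
end
end

section
/- Assume m_1, …, m_s are positive integers such that for each j ≤ s, M = [m_1, …, m_s] > [m_1, …, m_{j−1}, m_{j+1}, …, m_s], i.e., the least common multiple of all of them strictly exceeds the least common multiple obtained by omitting any single m_j. Then there exist divisors M* and M** of M, mutually distinct primes n_1, …, n_s, and positive integers r_1, …, r_s and n'_1, …, n'_s such that for each j ≤ s: (a) n_j^{r_j} divides m_j but n_j^{r_j+1} does not divide m_j, and n_j^{r_j} does not divide m_k for any k ≤ s with k ≠ j; (b) M = M* · n_1 ⋯ n_s = M** · n_1^{r_1} ⋯ n_s^{r_s}; and (c) M* · n_j = m_j · n'_j with gcd(n_j, n'_j) = 1 (that is, M*/m_j = n'_j / n_j in lowest terms). -/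
noncomputable section

theorem statement5 (s : ℕ) (m : Fin s → ℕ) (hm : ∀ j, 0 < m j)
    (hlcm : ∀ j : Fin s, Finset.lcm (Finset.univ.erase j) m < Finset.univ.lcm m) :
    ∃ (Mstar Mss : ℕ) (nn r n' : Fin s → ℕ),
      Mstar ∣ Finset.univ.lcm m ∧ Mss ∣ Finset.univ.lcm m ∧
      (∀ j, (nn j).Prime) ∧ Function.Injective nn ∧
      (∀ j, 0 < r j) ∧ (∀ j, 0 < n' j) ∧
      (∀ j, nn j ^ r j ∣ m j ∧ ¬ nn j ^ (r j + 1) ∣ m j ∧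
        ∀ k, k ≠ j → ¬ nn j ^ r j ∣ m k) ∧
      Finset.univ.lcm m = Mstar * ∏ j, nn j ∧
      Finset.univ.lcm m = Mss * ∏ j, nn j ^ r j ∧
      (∀ j, Mstar * nn j = m j * n' j ∧ Nat.gcd (nn j) (n' j) = 1) := by
  classical
  set M := Finset.univ.lcm m with hMdef
  have hm0 : ∀ j, m j ≠ 0 := fun j => (hm j).ne'
  have hmM : ∀ j, m j ∣ M := fun j => Finset.dvd_lcm (Finset.mem_univ j)
  have hLdvd : ∀ j, Finset.lcm (Finset.univ.erase j) m ∣ M := fun j =>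
    Finset.lcm_dvd fun k _ => Finset.dvd_lcm (Finset.mem_univ k)
  have hM0 : M ≠ 0 := by
    intro h
    rw [hMdef, Finset.lcm_eq_zero_iff] at h
    rcases h with ⟨j, -, hj⟩
    exact hm0 j hj
  have hL0 : ∀ j, Finset.lcm (Finset.univ.erase j) m ≠ 0 := by
    intro j h
    rcases hLdvd j with ⟨c, hc⟩
    rw [hc, h, zero_mul] at hM0
    exact hM0 rfl
  have key : ∀ j : Fin s, ∃ p : ℕ, p.Prime ∧
      (Finset.lcm (Finset.univ.erase j) m).factorization p < M.factorization p := by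
    intro j
    obtain ⟨c, hc⟩ := hLdvd j
    have hc0 : c ≠ 0 := by
      rintro rfl
      rw [mul_zero] at hc
      exact hM0 hc
    have hc1 : c ≠ 1 := by
      rintro rfl
      rw [mul_one] at hc
      exact absurd (hlcm j) (by rw [← hc]; exact lt_irrefl _)
    refine ⟨c.minFac, Nat.minFac_prime hc1, ?_⟩
    have hfac : M.factorization =
        (Finset.lcm (Finset.univ.erase j) m).factorization + c.factorization := by
      rw [hc, Nat.factorization_mul (hL0 j) hc0]
    have hpos : 0 < c.factorization c.minFac :=
      (Nat.minFac_prime hc1).factorization_pos_of_dvd hc0 (Nat.minFac_dvd c)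
    have := congrArg (fun f => f c.minFac) hfac
    simp only [Finsupp.add_apply] at this
    omega
  choose nn hnn hnnlt using key
  set r : Fin s → ℕ := fun j => M.factorization (nn j) with hrdef
  have hrpos : ∀ j, 0 < r j := fun j => lt_of_le_of_lt (Nat.zero_le _) (hnnlt j)
  have hfmj : ∀ j, (m j).factorization (nn j) = r j := by
    intro j
    have hins : M = Nat.lcm (m j) (Finset.lcm (Finset.univ.erase j) m) := by
      refine Nat.dvd_antisymm ?_ (Nat.lcm_dvd (hmM j) (hLdvd j))
      refine Finset.lcm_dvd fun k hk => ?_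
      by_cases hkj : k = j
      · subst hkj; exact Nat.dvd_lcm_left _ _
      · exact dvd_trans (Finset.dvd_lcm (Finset.mem_erase.mpr ⟨hkj, Finset.mem_univ k⟩))
          (Nat.dvd_lcm_right _ _)
    have h := Nat.factorization_lcm (hm0 j) (hL0 j)
    have h2 := congrArg (fun f => f (nn j)) h
    simp only [Finsupp.sup_apply] at h2
    have h3 : M.factorization (nn j) =
        max ((m j).factorization (nn j))
          ((Finset.lcm (Finset.univ.erase j) m).factorization (nn j)) := by
      rw [hins]; exact h2
    have h4 := hnnlt j
    show (m j).factorization (nn j) = M.factorization (nn j)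
    rw [h3]
    omega
  have hlt : ∀ j k, k ≠ j → (m k).factorization (nn j) < r j := by
    intro j k hkj
    have hmem : k ∈ Finset.univ.erase j := Finset.mem_erase.mpr ⟨hkj, Finset.mem_univ k⟩
    have hdvd : m k ∣ Finset.lcm (Finset.univ.erase j) m := Finset.dvd_lcm hmem
    have h := (Nat.factorization_le_iff_dvd (hm0 k) (hL0 j)).mpr hdvd (nn j)
    exact lt_of_le_of_lt h (hnnlt j)
  have hinj : Function.Injective nn := by
    intro j k h
    by_contra hne
    have h1 := hlt j k fun hh => hne hh.symm
    have h2 := hlt k j fun hh => hne hh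
    have e1 : (m k).factorization (nn j) = r k := by rw [h]; exact hfmj k
    have e2 : (m j).factorization (nn k) = r j := by rw [← h]; exact hfmj j
    omega
  have hp0 : ∀ j, nn j ≠ 0 := fun j => (hnn j).ne_zero
  -- factorization of products of prime powers
  have hfpow : ∀ (e : Fin s → ℕ) (q : ℕ),
      (∏ j, nn j ^ e j).factorization q = ∑ j, if nn j = q then e j else 0 := by
    intro e q
    rw [Nat.factorization_prod fun j _ => pow_ne_zero _ (hp0 j)]
    simp only [Finsupp.finset_sum_apply]
    refine Finset.sum_congr rfl fun j _ => ?_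
    rw [(hnn j).factorization_pow, Finsupp.single_apply]
  have hfpow_at : ∀ (e : Fin s → ℕ) (k : Fin s),
      (∏ j, nn j ^ e j).factorization (nn k) = e k := by
    intro e k
    rw [hfpow]
    rw [Finset.sum_eq_single k (fun b _ hbk => if_neg fun h => hbk (hinj h))
      (fun h => absurd (Finset.mem_univ k) h)]
    exact if_pos rfl
  have hfpow_ne : ∀ (e : Fin s → ℕ) (q : ℕ), (∀ k, nn k ≠ q) →
      (∏ j, nn j ^ e j).factorization q = 0 := by
    intro e q hq
    rw [hfpow]
    exact Finset.sum_eq_zero fun k _ => if_neg (hq k)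
  have hprod0 : ∀ (e : Fin s → ℕ), (∏ j, nn j ^ e j) ≠ 0 :=
    fun e => Finset.prod_ne_zero_iff.mpr fun j _ => pow_ne_zero _ (hp0 j)
  have hPdvdgen : ∀ (e : Fin s → ℕ), (∀ j, e j ≤ r j) → (∏ j, nn j ^ e j) ∣ M := by
    intro e he
    rw [← Nat.factorization_le_iff_dvd (hprod0 e) hM0]
    intro q
    by_cases hq : ∃ k, nn k = q
    · obtain ⟨k, rfl⟩ := hq
      rw [hfpow_at]
      exact he k
    · push_neg at hq
      rw [hfpow_ne e q hq]
      exact Nat.zero_le _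
  have hQeq : (∏ j, nn j) = ∏ j, nn j ^ (fun _ : Fin s => 1) j := by simp
  have hQdvd : (∏ j, nn j) ∣ M := by rw [hQeq]; exact hPdvdgen _ fun j => hrpos j
  have hPdvd : (∏ j, nn j ^ r j) ∣ M := hPdvdgen r fun j => le_rfl
  set Q := ∏ j, nn j with hQdef
  set P := ∏ j, nn j ^ r j with hPdef
  have hMQ : M = M / Q * Q := (Nat.div_mul_cancel hQdvd).symm
  have hMP : M = M / P * P := (Nat.div_mul_cancel hPdvd).symm
  have hMstar0 : M / Q ≠ 0 := by
    intro h
    rw [h, zero_mul] at hMQ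
    exact hM0 hMQ
  have hfQ1 : ∀ k, Q.factorization (nn k) = 1 := by
    intro k
    rw [hQeq]
    exact hfpow_at _ k
  have hfQ0 : ∀ q, (∀ k, nn k ≠ q) → Q.factorization q = 0 := by
    intro q hq
    rw [hQeq]
    exact hfpow_ne _ q hq
  have hfMstar := Nat.factorization_div hQdvd
  have hmfle : ∀ (j : Fin s) (q : ℕ), (m j).factorization q ≤ M.factorization q :=
    fun j q => (Nat.factorization_le_iff_dvd (hm0 j) hM0).mpr (hmM j) q
  have hfp_self : ∀ j, (nn j).factorization (nn j) = 1 := by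
    intro j
    rw [(hnn j).factorization, Finsupp.single_apply, if_pos rfl]
  have hfp_ne : ∀ j q, nn j ≠ q → (nn j).factorization q = 0 := by
    intro j q h
    rw [(hnn j).factorization, Finsupp.single_apply, if_neg h]
  have hdvdstar : ∀ j, m j ∣ M / Q * nn j := by
    intro j
    rw [← Nat.factorization_le_iff_dvd (hm0 j) (mul_ne_zero hMstar0 (hp0 j))]
    intro q
    rw [Nat.factorization_mul hMstar0 (hp0 j), Finsupp.add_apply, hfMstar,
      Finsupp.tsub_apply]
    by_cases hq : ∃ k, nn k = q
    · obtain ⟨k, rfl⟩ := hq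
      rw [hfQ1 k]
      by_cases hkj : k = j
      · subst hkj
        rw [hfp_self k, hfmj k]
        have := hrpos k
        simp only [hrdef]
        omega
      · rw [hfp_ne j (nn k) fun h => hkj (hinj h).symm]
        have h1 := hlt k j fun hh => hkj hh.symm
        simp only [hrdef] at h1 ⊢
        omega
    · push_neg at hq
      rw [hfQ0 q hq, hfp_ne j q (hq j), Nat.sub_zero, Nat.add_zero]
      exact hmfle j q
  refine ⟨M / Q, M / P, nn, r, fun j => M / Q * nn j / m j, ⟨Q, hMQ⟩, ⟨P, hMP⟩,
    hnn, hinj, hrpos, ?_, ?_, hMQ, hMP, ?_⟩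
  · intro j
    have h := Nat.mul_div_cancel' (hdvdstar j)
    have hne : M / Q * nn j ≠ 0 := mul_ne_zero hMstar0 (hp0 j)
    rcases Nat.eq_zero_or_pos (M / Q * nn j / m j) with h0 | h0
    · rw [h0, mul_zero] at h
      exact absurd h.symm hne
    · exact h0
  · intro j
    refine ⟨(Nat.Prime.pow_dvd_iff_le_factorization (hnn j) (hm0 j)).mpr
      (le_of_eq (hfmj j).symm), ?_, ?_⟩
    · intro h
      have := (Nat.Prime.pow_dvd_iff_le_factorization (hnn j) (hm0 j)).mp h
      rw [hfmj j] at this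
      omega
    · intro k hkj h
      have := (Nat.Prime.pow_dvd_iff_le_factorization (hnn j) (hm0 k)).mp h
      have h2 := hlt j k hkj
      omega
  · intro j
    have heq : M / Q * nn j = m j * (M / Q * nn j / m j) :=
      (Nat.mul_div_cancel' (hdvdstar j)).symm
    refine ⟨heq, ?_⟩
    set n'j := M / Q * nn j / m j with hn'def
    have hn'0 : n'j ≠ 0 := by
      intro h
      rw [h, mul_zero] at heq
      exact mul_ne_zero hMstar0 (hp0 j) heq
    have hval : n'j.factorization (nn j) = 0 := by
      have h1 := congrArg (fun x => x.factorization (nn j)) heq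
      simp only [Nat.factorization_mul hMstar0 (hp0 j),
        Nat.factorization_mul (hm0 j) hn'0, Finsupp.add_apply, hfMstar,
        Finsupp.tsub_apply, hfQ1 j, hfp_self j, hfmj j] at h1
      have := hrpos j
      simp only [hrdef] at h1 this
      omega
    have hcop : Nat.Coprime (nn j) n'j := by
      rw [(hnn j).coprime_iff_not_dvd]
      intro hdv
      have := (hnn j).factorization_pos_of_dvd hn'0 hdv
      omega
    exact hcop
end
end

section
/- Let m > 1 be a positive integer and let f : cl(Δ^n) → ℂ^n be a holomorphic mapping. Assume that the origin is an isolated fixed point of both f and f^m, and that the linear part of f at the origin has no periodic point of period m. Then there exist a ball B centered at the origin with cl(B) ⊆ Δ^n and a δ > 0 such that every holomorphic mapping g : cl(Δ^n) → ℂ^n with sup_{x ∈ cl(B)} |g(x) − f(x)| < δ has no periodic point of period m in B (i.e., there is no q ∈ B with g^k(q) ∈ B defined for k = 1, …, m, g^m(q) = q, and g^k(q) ≠ q for 1 ≤ k < m). -/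
open Metric Filter Function

noncomputable section

/-- `ℂ^n` as a Euclidean space. -/
abbrev En (n : ℕ) := EuclideanSpace ℂ (Fin n)

/-- `p` is an isolated fixed point of `f`. -/
def IsolatedFixedPt {X : Type*} [TopologicalSpace X] (f : X → X) (p : X) : Prop :=
  f p = p ∧ ∃ U : Set X, IsOpen U ∧ p ∈ U ∧ ∀ x ∈ U, f x = x → x = p

section Aux

variable {E : Type*} [NormedAddCommGroup E] [NormedSpace ℂ E]

lemma iter_clm (A : E →L[ℂ] E) (k : ℕ) (x : E) : (fun y => A y)^[k] x = (A^k) x := by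
  induction k generalizing x with
  | zero => simp
  | succ k ih =>
    rw [Function.iterate_succ_apply, ih, pow_succ, ContinuousLinearMap.mul_apply]

lemma pow_mul_fix (A : E →L[ℂ] E) {k : ℕ} {u : E} (h : (A^k) u = u) (t : ℕ) :
    (A^(k*t)) u = u := by
  induction t with
  | zero => simp
  | succ t ih =>
    rw [mul_add, mul_one, pow_add, ContinuousLinearMap.mul_apply, h, ih]

lemma gcd_fix (A : E →L[ℂ] E) : ∀ k : ℕ, ∀ j : ℕ, ∀ u : E,
    (A^j) u = u → (A^k) u = u → (A^(Nat.gcd k j)) u = u := by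
  intro k
  induction k using Nat.strong_induction_on with
  | _ k ih =>
    intro j u hj hk
    match k, hk with
    | 0, _ => simpa using hj
    | (k+1), hk =>
      rw [Nat.gcd_rec]
      have hmod : (A^(j % (k+1))) u = u := by
        conv_rhs => rw [← hj]
        conv_rhs => rw [← Nat.mod_add_div j (k+1)]
        rw [pow_add, ContinuousLinearMap.mul_apply, pow_mul_fix A hk]
      exact ih _ (Nat.mod_lt _ (Nat.succ_pos k)) _ u hk hmod

lemma exists_L (A : E →L[ℂ] E) (m : ℕ) (hm : 1 < m)
    (hlin : ¬ ∃ p : E, PeriodicPtOfPeriod (fun x => A x) m p) :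
    ∃ L, 0 < L ∧ L < m ∧ L ∣ m ∧ ∀ u : E, (A^m) u = u → (A^L) u = u := by
  classical
  by_cases hc : ∃ d, 0 < d ∧ d < m ∧ d ∣ m ∧ ∀ u : E, (A^m) u = u → (A^d) u = u
  · exact hc
  push_neg at hc
  exfalso
  apply hlin
  set E₀ : Subspace ℂ E := LinearMap.ker ((A^m - 1 : E →L[ℂ] E) : E →ₗ[ℂ] E) with hE₀
  have hmemE₀ : ∀ u : E, u ∈ E₀ ↔ (A^m) u = u := by
    intro u
    simp only [hE₀, LinearMap.mem_ker, ContinuousLinearMap.coe_coe,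
      ContinuousLinearMap.sub_apply, ContinuousLinearMap.one_apply, sub_eq_zero]
  set W : ℕ → Subspace ℂ ↥E₀ :=
    fun d => LinearMap.ker (((A^d - 1 : E →L[ℂ] E) : E →ₗ[ℂ] E).comp E₀.subtype) with hW
  have hmemW : ∀ d (x : ↥E₀), x ∈ W d ↔ (A^d) (x : E) = (x : E) := by
    intro d x
    simp only [hW, LinearMap.mem_ker, LinearMap.comp_apply, Submodule.subtype_apply,
      ContinuousLinearMap.coe_coe, ContinuousLinearMap.sub_apply,
      ContinuousLinearMap.one_apply, sub_eq_zero]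
  set t : Finset ℕ := (Finset.range m).filter (fun d => 0 < d ∧ d ∣ m) with ht
  set s : Finset (Subspace ℂ ↥E₀) := t.image W with hs
  have htop : ⊤ ∉ s := by
    intro htop
    rw [hs, Finset.mem_image] at htop
    obtain ⟨d, hdt, hdW⟩ := htop
    rw [ht, Finset.mem_filter, Finset.mem_range] at hdt
    obtain ⟨u, hu1, hu2⟩ := hc d hdt.2.1 hdt.1 hdt.2.2
    apply hu2
    have : (⟨u, (hmemE₀ u).2 hu1⟩ : ↥E₀) ∈ W d := by rw [hdW]; trivial
    exact (hmemW d _).1 this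
  have hne := Subspace.biUnion_ne_univ_of_top_notMem htop
  rw [Set.ne_univ_iff_exists_notMem] at hne
  obtain ⟨x, hx⟩ := hne
  refine ⟨(x : E), ?_, ?_⟩
  · rw [iter_clm]
    exact (hmemE₀ _).1 x.2
  · intro k hk0 hkm hfix
    rw [iter_clm] at hfix
    have hxm : (A^m) (x : E) = (x : E) := (hmemE₀ _).1 x.2
    have hd : (A^(Nat.gcd k m)) (x : E) = (x : E) := gcd_fix A k m _ hxm hfix
    apply hx
    rw [Set.mem_iUnion₂]
    refine ⟨W (Nat.gcd k m), ?_, (hmemW _ x).2 hd⟩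
    rw [hs]
    apply Finset.mem_image_of_mem
    rw [ht, Finset.mem_filter, Finset.mem_range]
    exact ⟨lt_of_le_of_lt (Nat.gcd_le_left m hk0) hkm, Nat.gcd_pos_of_pos_left m hk0,
      Nat.gcd_dvd_right k m⟩

lemma exists_CT [FiniteDimensional ℂ E] (A : E →L[ℂ] E) (m : ℕ) :
    ∃ C : ℝ, 1 ≤ C ∧ ∀ w : E, ∃ u, (A^m) u = u ∧ ‖w - u‖ ≤ C * ‖(A^m) w - w‖ := by
  classical
  set T : E →L[ℂ] E := A^m - 1 with hT
  have hTapp : ∀ v : E, T v = (A^m) v - v := by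
    intro v
    simp [hT, ContinuousLinearMap.sub_apply]
  set K : Subspace ℂ E := LinearMap.ker (T : E →ₗ[ℂ] E) with hK
  obtain ⟨W, hW⟩ := Submodule.exists_isCompl K
  set Tw : ↥W →ₗ[ℂ] E := (T : E →ₗ[ℂ] E).comp W.subtype with hTw
  have hinj : Function.Injective Tw := by
    rw [← LinearMap.ker_eq_bot]
    rw [Submodule.eq_bot_iff]
    intro w hw
    have hwK : (w : E) ∈ K := by
      rw [hK, LinearMap.mem_ker]
      simpa [hTw] using hw
    have : (w : E) ∈ K ⊓ W := ⟨hwK, w.2⟩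
    rw [hW.inf_eq_bot] at this
    exact Subtype.ext this
  set e := LinearEquiv.ofInjective Tw hinj with he
  set ec := e.toContinuousLinearEquiv with hec
  set c : ℝ := ‖(ec.symm : ↥(LinearMap.range Tw) →L[ℂ] ↥W)‖ with hc
  have hbound : ∀ w : ↥W, ‖(w : E)‖ ≤ c * ‖Tw w‖ := by
    intro w
    have h1 : ec.symm (ec w) = w := ec.symm_apply_apply w
    have h2 : ‖ec.symm (ec w)‖ ≤ c * ‖ec w‖ :=
      (ec.symm : ↥(LinearMap.range Tw) →L[ℂ] ↥W).le_opNorm (ec w)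
    rw [h1] at h2
    have h3 : ‖ec w‖ = ‖Tw w‖ := by
      have : ((ec w : ↥(LinearMap.range Tw)) : E) = Tw w := by
        simp [hec, he, LinearEquiv.coe_toContinuousLinearEquiv']
      rw [← this]
      rfl
    rw [h3] at h2
    calc ‖(w : E)‖ = ‖w‖ := rfl
    _ ≤ c * ‖Tw w‖ := h2
  refine ⟨max c 1, le_max_right _ _, ?_⟩
  intro v
  have hvtop : v ∈ K ⊔ W := by rw [hW.sup_eq_top]; trivial
  obtain ⟨u, hu, w, hw, huw⟩ := Submodule.mem_sup.mp hvtop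
  refine ⟨u, ?_, ?_⟩
  · have : T u = 0 := hu
    rw [hTapp] at this
    exact sub_eq_zero.mp this
  · have hvu : v - u = w := by rw [← huw]; abel
    have hTv : T v = Tw ⟨w, hw⟩ := by
      have : T v = T u + T w := by rw [← huw]; rw [map_add]
      have hTu : T u = 0 := hu
      rw [this, hTu, zero_add]
      rfl
    rw [hvu, ← hTapp, hTv]
    calc ‖w‖ = ‖((⟨w, hw⟩ : ↥W) : E)‖ := rfl
    _ ≤ c * ‖Tw ⟨w, hw⟩‖ := hbound _
    _ ≤ max c 1 * ‖Tw ⟨w, hw⟩‖ := by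
        apply mul_le_mul_of_nonneg_right (le_max_left _ _) (norm_nonneg _)

lemma pow_mul_fix' (A : E →L[ℂ] E) {k : ℕ} {u : E} (h : (A^k) u = u) (t : ℕ) :
    (A^(k*t)) u = u := by
  induction t with
  | zero => simp
  | succ t ih =>
    rw [mul_add, mul_one, pow_add, ContinuousLinearMap.mul_apply, h, ih]

lemma apow_bound (A : E →L[ℂ] E) (k : ℕ) (z : E) : ‖(A^k) z‖ ≤ (‖A‖+1)^k * ‖z‖ := by
  induction k with
  | zero => simp
  | succ k ih =>
    rw [pow_succ', ContinuousLinearMap.mul_apply]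
    calc ‖A ((A^k) z)‖ ≤ ‖A‖ * ‖(A^k) z‖ := A.le_opNorm _
    _ ≤ (‖A‖+1) * ((‖A‖+1)^k * ‖z‖) := by
        apply mul_le_mul (by linarith) ih (norm_nonneg _) (by positivity)
    _ = (‖A‖+1)^(k+1) * ‖z‖ := by ring

lemma key_seq (A : E →L[ℂ] E) (m L e : ℕ) (hm : 0 < m) (hLe : m = L * e)
    (hLfix : ∀ u : E, (A^m) u = u → (A^L) u = u)
    (C : ℝ) (hC : 1 ≤ C)
    (hCT : ∀ w : E, ∃ u, (A^m) u = u ∧ ‖w - u‖ ≤ C * ‖(A^m) w - w‖)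
    (η : ℝ) (hη0 : 0 ≤ η) (hη1 : η ≤ 1)
    (hηs : 2 * (1 + (‖A‖+1)^m) * (C * ((m:ℝ)*η) * (‖A‖+1)^m) ≤ 1/2)
    (v : ℕ → E) (hrec : ∀ k, k < m → ‖v (k+1) - A (v k)‖ ≤ η * ‖v k‖)
    (hvm : v m = v 0) (hsum : ∑ j ∈ Finset.range e, v (j*L) = 0) : v 0 = 0 := by
  set β : ℝ := ‖A‖ + 1 with hβ
  have hβ1 : 1 ≤ β := by rw [hβ]; linarith [norm_nonneg A]
  have hβ0 : 0 ≤ β := by linarith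
  set N : ℝ := ‖v 0‖ with hN
  have hN0 : 0 ≤ N := norm_nonneg _
  have he : 0 < e := by
    rcases Nat.eq_zero_or_pos e with h | h
    · subst h; simp at hLe; omega
    · exact h
  have hβm1 : 1 ≤ β^m := one_le_pow₀ hβ1
  have hβmono : ∀ k, k ≤ m → β^k ≤ β^m := fun k hk => pow_le_pow_right₀ hβ1 hk
  -- growth bound
  have b1 : ∀ k, k ≤ m → ‖v k‖ ≤ β^k * N := by
    intro k
    induction k with
    | zero => intro _; simp [hN]
    | succ k ih =>
      intro hk
      have hkm : k < m := by omega
      have h1 := hrec k hkm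
      calc ‖v (k+1)‖ = ‖(v (k+1) - A (v k)) + A (v k)‖ := by rw [sub_add_cancel]
      _ ≤ ‖v (k+1) - A (v k)‖ + ‖A (v k)‖ := norm_add_le _ _
      _ ≤ η * ‖v k‖ + ‖A‖ * ‖v k‖ := add_le_add h1 (A.le_opNorm _)
      _ = (‖A‖ + η) * ‖v k‖ := by ring
      _ ≤ β * (β^k * N) := by
          apply mul_le_mul (by rw [hβ]; linarith) (ih (by omega)) (norm_nonneg _) hβ0
      _ = β^(k+1) * N := by ring
  -- drift bound
  have b2 : ∀ k, k ≤ m → ‖v k - (A^k) (v 0)‖ ≤ k * η * β^k * N := by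
    intro k
    induction k with
    | zero => intro _; simp
    | succ k ih =>
      intro hk
      rw [Nat.cast_succ]
      have hkm : k < m := by omega
      have h1 := hrec k hkm
      have h2 : (A^(k+1)) (v 0) = A ((A^k) (v 0)) := by
        rw [pow_succ', ContinuousLinearMap.mul_apply]
      have hnn : (0:ℝ) ≤ η * (β^k * N) := by positivity
      calc ‖v (k+1) - (A^(k+1)) (v 0)‖
          = ‖(v (k+1) - A (v k)) + (A (v k) - (A^(k+1)) (v 0))‖ := by
            congr 1; abel
      _ ≤ ‖v (k+1) - A (v k)‖ + ‖A (v k) - (A^(k+1)) (v 0)‖ := norm_add_le _ _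
      _ ≤ η * ‖v k‖ + ‖A‖ * ‖v k - (A^k) (v 0)‖ := by
          apply add_le_add h1
          rw [h2, ← map_sub]
          exact A.le_opNorm _
      _ ≤ η * (β^k * N) + β * ((k:ℝ) * η * β^k * N) := by
          apply add_le_add
          · exact mul_le_mul_of_nonneg_left (b1 k (by omega)) hη0
          · apply mul_le_mul (by rw [hβ]; linarith) (ih (by omega)) (norm_nonneg _) hβ0
      _ = (1 + (k:ℝ)*β) * (η * (β^k * N)) := by ring
      _ ≤ (((k:ℝ)+1)*β) * (η * (β^k * N)) := by
          apply mul_le_mul_of_nonneg_right _ hnn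
          have hk0 : (0:ℝ) ≤ (k:ℝ) := Nat.cast_nonneg k
          have hkb : (k:ℝ)*1 ≤ (k:ℝ)*β := mul_le_mul_of_nonneg_left hβ1 hk0
          linarith
      _ = ((k:ℝ)+1) * η * β^(k+1) * N := by ring
  have hTv : ‖(A^m) (v 0) - v 0‖ ≤ (m:ℝ) * η * β^m * N := by
    have h := b2 m le_rfl
    rw [hvm] at h
    rwa [norm_sub_rev]
  obtain ⟨u, hu, hvu⟩ := hCT (v 0)
  have hC0 : (0:ℝ) ≤ C := by linarith
  have hvu2 : ‖v 0 - u‖ ≤ C * ((m:ℝ) * η * β^m * N) := by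
    calc ‖v 0 - u‖ ≤ C * ‖(A^m) (v 0) - v 0‖ := hvu
    _ ≤ C * ((m:ℝ) * η * β^m * N) := mul_le_mul_of_nonneg_left hTv hC0
  set X : ℝ := (1 + β^m) * (C * ((m:ℝ)*η) * β^m) * N with hX
  have hX0 : 0 ≤ X := by positivity
  have b3 : ∀ j, j < e → ‖v (j*L) - u‖ ≤ X := by
    intro j hj
    have hjL : j * L ≤ m := by
      rw [hLe, mul_comm L e]
      exact Nat.mul_le_mul_right L (Nat.le_of_lt hj)
    have hAu : (A^(j*L)) u = u := by
      rw [mul_comm]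
      exact pow_mul_fix' A (hLfix u hu) j
    have step1 : ‖v (j*L) - u‖ ≤ ‖v (j*L) - (A^(j*L)) (v 0)‖ + ‖(A^(j*L)) (v 0) - u‖ := by
      calc ‖v (j*L) - u‖
          = ‖(v (j*L) - (A^(j*L)) (v 0)) + ((A^(j*L)) (v 0) - u)‖ := by congr 1; abel
      _ ≤ _ := norm_add_le _ _
    have step2 : ‖(A^(j*L)) (v 0) - u‖ ≤ β^m * ‖v 0 - u‖ := by
      have heq : (A^(j*L)) (v 0) - u = (A^(j*L)) (v 0 - u) := by rw [map_sub, hAu]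
      rw [heq]
      calc ‖(A^(j*L)) (v 0 - u)‖ ≤ β^(j*L) * ‖v 0 - u‖ := apow_bound A _ _
      _ ≤ β^m * ‖v 0 - u‖ := mul_le_mul_of_nonneg_right (hβmono _ hjL) (norm_nonneg _)
    have step3 : ‖v (j*L) - (A^(j*L)) (v 0)‖ ≤ C * ((m:ℝ) * η * β^m * N) := by
      calc ‖v (j*L) - (A^(j*L)) (v 0)‖ ≤ (j*L : ℕ) * η * β^(j*L) * N := b2 _ hjL
      _ ≤ (m:ℝ) * η * β^m * N := by
          have hjm : ((j*L : ℕ):ℝ) ≤ (m:ℝ) := by exact_mod_cast hjL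
          have hb := hβmono _ hjL
          have h1 : ((j*L : ℕ):ℝ) * η * β^(j*L) ≤ (m:ℝ) * η * β^m := by
            have h0' : (0:ℝ) ≤ β^(j*L) := by positivity
            have h0'' : (0:ℝ) ≤ (m:ℝ) * η := by positivity
            calc ((j*L : ℕ):ℝ) * η * β^(j*L) ≤ (m:ℝ) * η * β^(j*L) := by
                  apply mul_le_mul_of_nonneg_right (mul_le_mul_of_nonneg_right hjm hη0) h0'
            _ ≤ (m:ℝ) * η * β^m := mul_le_mul_of_nonneg_left hb h0''
          exact mul_le_mul_of_nonneg_right h1 hN0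
      _ ≤ C * ((m:ℝ) * η * β^m * N) := le_mul_of_one_le_left (by positivity) hC
    have step4 : β^m * ‖v 0 - u‖ ≤ β^m * (C * ((m:ℝ) * η * β^m * N)) :=
      mul_le_mul_of_nonneg_left hvu2 (by positivity)
    have hfin : ‖v (j*L) - u‖ ≤ C * ((m:ℝ) * η * β^m * N) + β^m * (C * ((m:ℝ) * η * β^m * N)) := by
      linarith
    have hXeq : X = C * ((m:ℝ) * η * β^m * N) + β^m * (C * ((m:ℝ) * η * β^m * N)) := by
      rw [hX]; ring
    linarith
  -- sum bound
  have hsum2 : (e:ℝ) * ‖u‖ ≤ (e:ℝ) * X := by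
    have h1 : ∑ j ∈ Finset.range e, (u - v (j*L)) = (e:ℝ) • u := by
      rw [Finset.sum_sub_distrib, hsum, sub_zero, Finset.sum_const, Finset.card_range,
        Nat.cast_smul_eq_nsmul]
    have h2 : ‖∑ j ∈ Finset.range e, (u - v (j*L))‖ ≤ (e:ℝ) * X := by
      calc ‖∑ j ∈ Finset.range e, (u - v (j*L))‖ ≤ ∑ j ∈ Finset.range e, ‖u - v (j*L)‖ :=
        norm_sum_le _ _
      _ ≤ ∑ _j ∈ Finset.range e, X := by
          apply Finset.sum_le_sum
          intro j hj
          rw [norm_sub_rev]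
          exact b3 j (Finset.mem_range.mp hj)
      _ = (e:ℝ) * X := by rw [Finset.sum_const, Finset.card_range, nsmul_eq_mul]
    rw [h1, norm_smul] at h2
    simpa using h2
  have hu_bound : ‖u‖ ≤ X := by
    have he' : (0:ℝ) < (e:ℝ) := by exact_mod_cast he
    exact le_of_mul_le_mul_left (by simpa using hsum2) he'
  have hfinal : N ≤ (1/2) * N := by
    have h1 : N ≤ ‖v 0 - u‖ + ‖u‖ := by
      calc N = ‖v 0‖ := hN
      _ = ‖(v 0 - u) + u‖ := by rw [sub_add_cancel]
      _ ≤ ‖v 0 - u‖ + ‖u‖ := norm_add_le _ _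
    have h2 : ‖v 0 - u‖ ≤ X := by
      rw [hX]
      have hb : C * ((m:ℝ) * η * β^m * N) ≤ (1 + β^m) * (C * ((m:ℝ)*η) * β^m) * N := by
        have h3 : C * ((m:ℝ) * η * β^m * N) = (C * ((m:ℝ)*η) * β^m) * N := by ring
        rw [h3]
        apply mul_le_mul_of_nonneg_right _ hN0
        apply le_mul_of_one_le_left (by positivity)
        linarith [pow_nonneg hβ0 m]
      linarith [hvu2]
    have h3 : N ≤ 2 * X := by linarith
    have h4 : 2 * X ≤ (1/2) * N := by
      rw [hX]
      calc 2 * ((1 + β^m) * (C * ((m:ℝ)*η) * β^m) * N)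
          = (2 * (1 + β^m) * (C * ((m:ℝ)*η) * β^m)) * N := by ring
      _ ≤ (1/2) * N := mul_le_mul_of_nonneg_right hηs hN0
    linarith
  have : N = 0 := by linarith
  rw [hN] at this
  exact norm_eq_zero.mp this

lemma cauchy_dir {X : Type*} [NormedAddCommGroup X] [NormedSpace ℂ X]
    {Y : Type*} [NormedAddCommGroup Y] [NormedSpace ℂ Y] {h : X → Y} {x₀ : X} {ρ M : ℝ} (hρ : 0 < ρ) (hM : 0 ≤ M)
    (hd : ∀ x ∈ ball x₀ ρ, DifferentiableAt ℂ h x)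
    (hb : ∀ x ∈ ball x₀ ρ, ‖h x‖ ≤ M) (w : X) :
    ‖fderiv ℂ h x₀ w‖ ≤ (2*M)/ρ * ‖w‖ := by
  rcases eq_or_ne w 0 with hw | hw
  · simp [hw]
  have hw0 : 0 < ‖w‖ := norm_pos_iff.mpr hw
  set φ : ℂ → Y := fun z => h (x₀ + z • w) with hφ
  have hx₀ : x₀ ∈ ball x₀ ρ := mem_ball_self hρ
  set ρw : ℝ := ρ / ‖w‖ with hρw
  have hρw0 : 0 < ρw := by positivity
  have hmem : ∀ z ∈ ball (0:ℂ) ρw, x₀ + z • w ∈ ball x₀ ρ := by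
    intro z hz
    rw [mem_ball] at hz ⊢
    rw [dist_eq_norm, add_sub_cancel_left, norm_smul]
    rw [dist_eq_norm, sub_zero] at hz
    calc ‖z‖ * ‖w‖ < ρw * ‖w‖ := mul_lt_mul_of_pos_right hz hw0
    _ = ρ := by rw [hρw]; field_simp
  have hinner : ∀ z : ℂ, DifferentiableAt ℂ (fun z : ℂ => x₀ + z • w) z := by
    intro z
    apply DifferentiableAt.const_add
    exact differentiableAt_id.smul_const w
  have hφd : DifferentiableOn ℂ φ (ball 0 ρw) := by
    intro z hz
    apply DifferentiableAt.differentiableWithinAt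
    exact (hd _ (hmem z hz)).comp z (hinner z)
  have hDφ : HasDerivAt φ (fderiv ℂ h x₀ w) 0 := by
    have h1 : HasDerivAt (fun z : ℂ => x₀ + z • w) w 0 := by
      simpa using ((hasDerivAt_id (0:ℂ)).smul_const w).const_add x₀
    have h2 : HasFDerivAt h (fderiv ℂ h x₀) (x₀ + (0:ℂ) • w) := by
      simpa using (hd _ hx₀).hasFDerivAt
    exact h2.comp_hasDerivAt 0 h1
  have hkey : ∀ μ : ℝ, 0 < μ → ‖fderiv ℂ h x₀ w‖ ≤ (2*M + μ)/ρw := by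
    intro μ hμ
    have hmaps : Set.MapsTo φ (ball 0 ρw) (ball (φ 0) (2*M + μ)) := by
      intro z hz
      rw [mem_ball, dist_eq_norm]
      calc ‖φ z - φ 0‖ ≤ ‖φ z‖ + ‖φ 0‖ := norm_sub_le _ _
      _ ≤ M + M := add_le_add (hb _ (hmem z hz)) (hb _ (hmem 0 (mem_ball_self hρw0)))
      _ < 2*M + μ := by linarith
    have := Complex.norm_deriv_le_div_of_mapsTo_ball hφd (hmaps.mono_right ball_subset_closedBall) hρw0
    rwa [hDφ.deriv] at this
  have hfin : ‖fderiv ℂ h x₀ w‖ ≤ (2*M)/ρw := by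
    apply le_of_forall_pos_le_add
    intro ε hε
    have := hkey (ε * ρw) (by positivity)
    calc ‖fderiv ℂ h x₀ w‖ ≤ (2*M + ε*ρw)/ρw := this
    _ = 2*M/ρw + ε := by field_simp
  calc ‖fderiv ℂ h x₀ w‖ ≤ (2*M)/ρw := hfin
  _ = (2*M)/ρ * ‖w‖ := by rw [hρw]; field_simp

lemma chain_radius {X : Type*} [NormedAddCommGroup X] {f : X → X}
    (hc : ContinuousOn f (closedBall 0 (1/2))) (hca : ContinuousAt f 0) (hf0 : f 0 = 0)
    (m : ℕ) :
    ∃ r : ℝ, 0 < r ∧ r ≤ 1/4 ∧ ∀ j ≤ m,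
      Set.MapsTo f^[j] (closedBall 0 r) (closedBall 0 (1/4)) ∧
      ContinuousOn f^[j] (closedBall 0 r) := by
  induction m with
  | zero =>
    refine ⟨1/4, by norm_num, le_refl _, ?_⟩
    intro j hj
    interval_cases j
    simp only [Function.iterate_zero]
    exact ⟨fun x hx => hx, continuousOn_id⟩
  | succ m ih =>
    obtain ⟨r, hr0, hr14, hmaps⟩ := ih
    obtain ⟨τ, hτ0, hτ⟩ := Metric.continuousAt_iff.mp hca r hr0
    refine ⟨min r (τ/2), by positivity, le_trans (min_le_left _ _) hr14, ?_⟩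
    intro j hj
    have hsub : closedBall (0:X) (min r (τ/2)) ⊆ closedBall 0 r :=
      closedBall_subset_closedBall (min_le_left _ _)
    have hfx : ∀ x ∈ closedBall (0:X) (min r (τ/2)), f x ∈ closedBall (0:X) r := by
      intro x hx
      rw [mem_closedBall] at hx ⊢
      have h1 : dist x 0 < τ := by
        calc dist x 0 ≤ min r (τ/2) := hx
        _ ≤ τ/2 := min_le_right _ _
        _ < τ := by linarith
      have := hτ h1
      rw [hf0] at this
      exact le_of_lt this
    match j with
    | 0 =>
      simp only [Function.iterate_zero]
      refine ⟨fun x hx => ?_, continuousOn_id⟩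
      exact closedBall_subset_closedBall hr14 (hsub hx)
    | (j+1) =>
      have hjm : j ≤ m := by omega
      rw [Function.iterate_succ]
      constructor
      · intro x hx
        exact (hmaps j hjm).1 (hfx x hx)
      · apply ContinuousOn.comp (hmaps j hjm).2 _ hfx
        apply hc.mono
        apply closedBall_subset_closedBall
        calc min r (τ/2) ≤ r := min_le_left _ _
        _ ≤ 1/2 := by linarith


end Aux

set_option maxHeartbeats 2000000 in
theorem statement9 (n m : ℕ) (hm : 1 < m)
    (f : En n → En n)
    (hf : DifferentiableOn ℂ f (closure (ball (0 : En n) 1)))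
    (h0 : IsolatedFixedPt f 0)
    (h0m : IsolatedFixedPt (f^[m]) 0)
    (hlin : ¬ ∃ p : En n, PeriodicPtOfPeriod (fun x => fderiv ℂ f 0 x) m p) :
    ∃ r : ℝ, 0 < r ∧ closure (ball (0 : En n) r) ⊆ ball (0 : En n) 1 ∧
      ∃ δ : ℝ, 0 < δ ∧
        ∀ g : En n → En n, DifferentiableOn ℂ g (closure (ball (0 : En n) 1)) →
          (∀ x ∈ closure (ball (0 : En n) r), dist (g x) (f x) < δ) →
          ¬ ∃ q ∈ ball (0 : En n) r,
              (∀ k : ℕ, 1 ≤ k → k ≤ m → g^[k] q ∈ ball (0 : En n) r) ∧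
              g^[m] q = q ∧ ∀ k : ℕ, 1 ≤ k → k < m → g^[k] q ≠ q := by
  classical
  have hm0 : 0 < m := by omega
  have hball1 : ball (0 : En n) 1 ⊆ closure (ball (0 : En n) 1) := subset_closure
  have hfball : ∀ x ∈ ball (0 : En n) 1, DifferentiableAt ℂ f x := by
    intro x hx
    exact (hf.mono hball1).differentiableAt (isOpen_ball.mem_nhds hx)
  have hf0 : f 0 = 0 := h0.1
  have h01 : (0 : En n) ∈ ball (0 : En n) 1 := mem_ball_self one_pos
  set A : En n →L[ℂ] En n := fderiv ℂ f 0 with hA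
  -- Part 1 : the sub-period L
  obtain ⟨L, hL0, hLm, hLdvd, hLfix⟩ := exists_L A m hm hlin
  set e' : ℕ := m / L with he'
  have hme : m = L * e' := (Nat.mul_div_cancel' hLdvd).symm
  -- Part 2 : the constant C
  obtain ⟨C, hC1, hCT⟩ := exists_CT A m
  -- the constant η
  set β : ℝ := ‖A‖ + 1 with hβ
  have hβ1 : (1:ℝ) ≤ β := by rw [hβ]; linarith [norm_nonneg A]
  have hβm0 : (0:ℝ) < β^m := by positivity
  set D : ℝ := 2 * (1 + β^m) * (C * (m:ℝ) * β^m) with hD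
  have hD0 : 0 ≤ D := by
    have : (0:ℝ) ≤ C := by linarith
    rw [hD]; positivity
  set η : ℝ := min 1 (1/(4*D+1)) with hη
  have hη0 : 0 < η := by
    apply lt_min one_pos
    positivity
  have hη1 : η ≤ 1 := min_le_left _ _
  have hηs : 2 * (1 + β^m) * (C * ((m:ℝ)*η) * β^m) ≤ 1/2 := by
    have h1 : 2 * (1 + β^m) * (C * ((m:ℝ)*η) * β^m) = D * η := by rw [hD]; ring
    have h2 : η ≤ 1/(4*D+1) := min_le_right _ _
    have h3 : D * η ≤ D * (1/(4*D+1)) :=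
      mul_le_mul_of_nonneg_left h2 hD0
    have h4 : D * (1/(4*D+1)) ≤ 1/2 := by
      rw [mul_one_div, div_le_iff₀ (by linarith)]
      linarith
    linarith
  -- isolated fixed point data
  obtain ⟨hfm0, U, hUopen, hU0, hUuniq⟩ := h0m
  obtain ⟨εU, hεU0, hεUball⟩ := Metric.isOpen_iff.mp hUopen 0 hU0
  -- chain radius
  have hccont : ContinuousOn f (closedBall (0 : En n) (1/2)) := by
    apply hf.continuousOn.mono
    intro x hx
    apply hball1
    rw [mem_ball, dist_zero_right]
    rw [mem_closedBall, dist_zero_right] at hx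
    linarith
  obtain ⟨r₀, hr₀0, hr₀14, hchain⟩ :=
    chain_radius hccont (hfball 0 h01).continuousAt hf0 m
  set r : ℝ := min r₀ (εU/2) with hr
  have hr0 : 0 < r := lt_min hr₀0 (by positivity)
  have hr14 : r ≤ 1/4 := le_trans (min_le_left _ _) hr₀14
  have hrU : closedBall (0 : En n) r ⊆ U := by
    intro x hx
    apply hεUball
    rw [mem_ball, dist_zero_right]
    rw [mem_closedBall, dist_zero_right] at hx
    calc ‖x‖ ≤ r := hx
    _ ≤ εU/2 := min_le_right _ _
    _ < εU := by linarith
  have hchain' : ∀ j ≤ m,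
      Set.MapsTo f^[j] (closedBall (0:En n) r) (closedBall (0:En n) (1/4)) ∧
      ContinuousOn f^[j] (closedBall (0:En n) r) := by
    intro j hj
    have hsub : closedBall (0:En n) r ⊆ closedBall (0:En n) r₀ :=
      closedBall_subset_closedBall (min_le_left _ _)
    exact ⟨((hchain j hj).1).mono_left hsub, ((hchain j hj).2).mono hsub⟩
  -- Lipschitz constant for f on ball 0 (1/2)
  obtain ⟨Mf, hMf⟩ := (isCompact_closedBall (0 : En n) (3/4)).exists_bound_of_continuousOn
    (hf.continuousOn.mono (by
      intro x hx
      apply hball1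
      rw [mem_ball, dist_zero_right]
      rw [mem_closedBall, dist_zero_right] at hx
      linarith))
  have hMf0 : 0 ≤ Mf := le_trans (norm_nonneg _) (hMf 0 (mem_closedBall_self (by norm_num)))
  have hb34 : ∀ x : En n, ‖x‖ < 1/2 → ball x (1/4) ⊆ closedBall (0:En n) (3/4) := by
    intro x hx y hy
    rw [mem_ball, dist_eq_norm] at hy
    rw [mem_closedBall, dist_zero_right]
    calc ‖y‖ = ‖(y - x) + x‖ := by rw [sub_add_cancel]
    _ ≤ ‖y - x‖ + ‖x‖ := norm_add_le _ _
    _ ≤ 3/4 := by linarith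
  have hDf : ∀ x ∈ ball (0:En n) (1/2), ‖fderiv ℂ f x‖ ≤ 8*Mf := by
    intro x hx
    rw [mem_ball, dist_zero_right] at hx
    have hsub : ball x (1/4) ⊆ ball (0:En n) 1 := by
      intro y hy
      have := hb34 x hx hy
      rw [mem_closedBall, dist_zero_right] at this
      rw [mem_ball, dist_zero_right]
      linarith
    apply ContinuousLinearMap.opNorm_le_bound _ (by positivity)
    intro w
    have := cauchy_dir (h := f) (x₀ := x) (ρ := 1/4) (M := Mf) (by norm_num) hMf0
      (fun y hy => hfball y (hsub hy)) (fun y hy => hMf y (hb34 x hx hy)) w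
    calc ‖fderiv ℂ f x w‖ ≤ (2*Mf)/(1/4) * ‖w‖ := this
    _ = 8*Mf * ‖w‖ := by ring
  set Lf : ℝ := 8*Mf + 1 with hLfdef
  have hLf0 : 0 < Lf := by rw [hLfdef]; linarith
  have hflip : ∀ x ∈ ball (0:En n) (1/2), ∀ y ∈ ball (0:En n) (1/2),
      ‖f y - f x‖ ≤ Lf * ‖y - x‖ := by
    intro x hx y hy
    apply Convex.norm_image_sub_le_of_norm_fderiv_le
      (fun z hz => hfball z (by
        rw [mem_ball, dist_zero_right] at hz ⊢
        linarith))
      (fun z hz => le_trans (hDf z hz) (by rw [hLfdef]; linarith))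
      (convex_ball _ _) hx hy
  -- radius s where the derivative of f is η/2-close to A
  obtain ⟨s, hs0, hsr2, hDfA⟩ : ∃ s : ℝ, 0 < s ∧ s ≤ r/2 ∧
      ∀ x ∈ ball (0:En n) s, ‖fderiv ℂ f x - A‖ ≤ η/2 := by
    have hder : HasFDerivAt f A 0 := (hfball 0 h01).hasFDerivAt
    have ho := hasFDerivAt_iff_isLittleO_nhds_zero.mp hder
    have hev := ho.def (show (0:ℝ) < η/8 by positivity)
    rw [Metric.eventually_nhds_iff] at hev
    obtain ⟨t, ht0, htb⟩ := hev
    set t' : ℝ := min t (1/4) with ht'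
    have ht'0 : 0 < t' := lt_min ht0 (by norm_num)
    have ht'14 : t' ≤ 1/4 := min_le_right _ _
    have hb2 : ∀ y ∈ ball (0:En n) t', ‖f y - A y‖ ≤ η/8 * t' := by
      intro y hy
      rw [mem_ball, dist_zero_right] at hy
      have h1 : dist y 0 < t := by
        rw [dist_zero_right]
        exact lt_of_lt_of_le hy (min_le_left _ _)
      have h2 := htb h1
      simp only [zero_add, hf0, sub_zero] at h2
      calc ‖f y - A y‖ ≤ η/8 * ‖y‖ := h2
      _ ≤ η/8 * t' := mul_le_mul_of_nonneg_left (le_of_lt hy) (by positivity)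
    have hd2 : ∀ y ∈ ball (0:En n) t', DifferentiableAt ℂ (fun z => f z - A z) y := by
      intro y hy
      apply DifferentiableAt.sub _ A.differentiableAt
      apply hfball
      rw [mem_ball, dist_zero_right] at hy ⊢
      linarith
    refine ⟨min (t'/2) (r/2), by positivity, min_le_right _ _, ?_⟩
    intro x hx
    rw [mem_ball, dist_zero_right] at hx
    have hxt : ‖x‖ < t'/2 := lt_of_lt_of_le hx (min_le_left _ _)
    have hsub : ball x (t'/2) ⊆ ball (0:En n) t' := by
      intro y hy
      rw [mem_ball, dist_eq_norm] at hy
      rw [mem_ball, dist_zero_right]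
      calc ‖y‖ = ‖(y-x)+x‖ := by rw [sub_add_cancel]
      _ ≤ ‖y-x‖+‖x‖ := norm_add_le _ _
      _ < t'/2 + t'/2 := add_lt_add hy hxt
      _ = t' := by ring
    have hx1 : x ∈ ball (0:En n) 1 := by
      rw [mem_ball, dist_zero_right]
      linarith
    have heq : fderiv ℂ (fun z => f z - A z) x = fderiv ℂ f x - A := by
      rw [fderiv_fun_sub (hfball x hx1) A.differentiableAt, A.fderiv]
    apply ContinuousLinearMap.opNorm_le_bound _ (by positivity)
    intro w
    have hst := cauchy_dir (h := fun z => f z - A z) (x₀ := x) (ρ := t'/2) (M := η/8*t')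
      (by positivity) (by positivity) (fun y hy => hd2 y (hsub hy))
      (fun y hy => hb2 y (hsub hy)) w
    rw [heq] at hst
    have hne : t' ≠ 0 := ne_of_gt ht'0
    calc ‖(fderiv ℂ f x - A) w‖ ≤ (2*(η/8*t'))/(t'/2) * ‖w‖ := hst
    _ = η/2 * ‖w‖ := by
        rw [show (2*(η/8*t'))/(t'/2) = η/2 from by field_simp; ring]
  -- the minimum c
  obtain ⟨c, hc0, hcmin⟩ : ∃ c : ℝ, 0 < c ∧
      ∀ y ∈ closedBall (0:En n) r \ ball (0:En n) s, c ≤ ‖f^[m] y - y‖ := by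
    by_cases hne : (closedBall (0:En n) r \ ball (0:En n) s).Nonempty
    · have hKccomp : IsCompact (closedBall (0:En n) r \ ball (0:En n) s) :=
        (isCompact_closedBall _ _).diff isOpen_ball
      have hFcont : ContinuousOn (fun y => ‖f^[m] y - y‖)
          (closedBall (0:En n) r \ ball (0:En n) s) :=
        (((hchain' m le_rfl).2.mono Set.diff_subset).sub continuousOn_id).norm
      obtain ⟨y₀, hy₀K, hy₀min⟩ := hKccomp.exists_isMinOn hne hFcont
      refine ⟨‖f^[m] y₀ - y₀‖, ?_, fun y hy => hy₀min hy⟩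
      rcases (norm_nonneg (f^[m] y₀ - y₀)).lt_or_eq with hpos | hzero
      · exact hpos
      exfalso
      have hfix : f^[m] y₀ = y₀ := by
        have := hzero.symm
        rw [norm_eq_zero, sub_eq_zero] at this
        exact this
      have hy₀0 : y₀ = 0 := hUuniq y₀ (hrU hy₀K.1) hfix
      apply hy₀K.2
      rw [hy₀0]
      exact mem_ball_self hs0
    · exact ⟨1, one_pos, fun y hy => absurd ⟨y, hy⟩ hne⟩
  -- δ
  set δ : ℝ := min (c / (2 * (Lf+1)^m)) (η * r / 16) with hδ
  have hδ0 : 0 < δ := by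
    apply lt_min
    · apply div_pos hc0
      positivity
    · have h1 : 0 < η * r := mul_pos hη0 hr0
      linarith
  refine ⟨r, hr0, ?_, δ, hδ0, ?_⟩
  · apply subset_trans closure_ball_subset_closedBall
    apply closedBall_subset_ball
    linarith
  intro g hg hclose hbad
  obtain ⟨q, hq, horb, hgm, hexact⟩ := hbad
  have hgball : ∀ x ∈ ball (0 : En n) 1, DifferentiableAt ℂ g x := by
    intro x hx
    exact (hg.mono hball1).differentiableAt (isOpen_ball.mem_nhds hx)
  set p : ℕ → En n := fun k => g^[k] q with hp
  have hpm : ∀ k, p (k + m) = p k := by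
    intro k
    simp only [hp]
    rw [Function.iterate_add_apply, hgm]
  have hsball1 : ball (0:En n) s ⊆ ball (0:En n) 1 := by
    intro z hz
    rw [mem_ball, dist_zero_right] at hz ⊢
    have : s ≤ 1/8 := by linarith
    linarith
  have hmulp : ∀ t k0, p (k0 + m*t) = p k0 := by
    intro t
    induction t with
    | zero => intro k0; simp
    | succ t ih =>
      intro k0
      have h1 : k0 + m*(t+1) = (k0 + m*t) + m := by ring
      rw [h1, hpm, ih]
  have hpball : ∀ k, p k ∈ ball (0:En n) r := by
    intro k
    have hk1 : p k = p (k % m) := by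
      conv_lhs => rw [show k = k % m + m * (k/m) from (Nat.mod_add_div k m).symm]
      exact hmulp (k/m) (k % m)
    rw [hk1]
    rcases Nat.eq_zero_or_pos (k % m) with h | h
    · rw [h]
      simpa only [hp, Function.iterate_zero_apply] using hq
    · exact horb (k % m) h (le_of_lt (Nat.mod_lt k hm0))
  have hpfix : ∀ k, g^[m] (p k) = p k := by
    intro k
    have : g^[m] (p k) = p (m + k) := by
      simp only [hp]
      rw [Function.iterate_add_apply]
    rw [this, Nat.add_comm, hpm]
  -- localization
  have hps : ∀ k, p k ∈ ball (0:En n) s := by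
    intro k
    have hxball : p k ∈ ball (0:En n) r := hpball k
    have hgj : ∀ j, g^[j] (p k) = p (j + k) := by
      intro j
      simp only [hp]
      rw [Function.iterate_add_apply]
    have hLf1 : (1:ℝ) ≤ Lf + 1 := by linarith
    have happrox : ∀ j, j ≤ m → ‖g^[j] (p k) - f^[j] (p k)‖ ≤ δ * (Lf+1)^j := by
      intro j
      induction j with
      | zero =>
        intro _
        simp only [Function.iterate_zero_apply, sub_self, norm_zero, pow_zero, mul_one]
        exact le_of_lt hδ0
      | succ j ih =>
        intro hj
        have hjm : j ≤ m := by omega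
        have ihj := ih hjm
        have hξ : g^[j] (p k) ∈ ball (0:En n) r := by
          rw [hgj]
          exact hpball (j+k)
        have hζ : f^[j] (p k) ∈ closedBall (0:En n) (1/4) :=
          (hchain' j hjm).1 (ball_subset_closedBall hxball)
        have hξ2 : g^[j] (p k) ∈ ball (0:En n) (1/2) := by
          rw [mem_ball, dist_zero_right] at hξ ⊢
          linarith
        have hζ2 : f^[j] (p k) ∈ ball (0:En n) (1/2) := by
          rw [mem_closedBall, dist_zero_right] at hζ
          rw [mem_ball, dist_zero_right]
          linarith
        rw [Function.iterate_succ_apply', Function.iterate_succ_apply']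
        have hT1 : ‖g (g^[j] (p k)) - f (g^[j] (p k))‖ ≤ δ := by
          have := hclose _ (subset_closure hξ)
          rw [dist_eq_norm] at this
          exact le_of_lt this
        have hT2 : ‖f (g^[j] (p k)) - f (f^[j] (p k))‖ ≤ Lf * (δ * (Lf+1)^j) := by
          calc ‖f (g^[j] (p k)) - f (f^[j] (p k))‖
              ≤ Lf * ‖g^[j] (p k) - f^[j] (p k)‖ := hflip _ hζ2 _ hξ2
          _ ≤ Lf * (δ * (Lf+1)^j) := mul_le_mul_of_nonneg_left ihj (le_of_lt hLf0)
        have hpow : (1:ℝ) ≤ (Lf+1)^j := one_le_pow₀ hLf1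
        calc ‖g (g^[j] (p k)) - f (f^[j] (p k))‖
            = ‖(g (g^[j] (p k)) - f (g^[j] (p k))) + (f (g^[j] (p k)) - f (f^[j] (p k)))‖ := by
              rw [sub_add_sub_cancel]
        _ ≤ ‖g (g^[j] (p k)) - f (g^[j] (p k))‖ + ‖f (g^[j] (p k)) - f (f^[j] (p k))‖ :=
            norm_add_le _ _
        _ ≤ δ + Lf * (δ * (Lf+1)^j) := add_le_add hT1 hT2
        _ ≤ δ * (Lf+1)^(j+1) := by
            have hexp : (Lf+1)^(j+1) = (Lf+1)^j + Lf * (Lf+1)^j := by ring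
            have h5 : δ + Lf * (δ * (Lf+1)^j) = δ * (1 + Lf * (Lf+1)^j) := by ring
            rw [h5, hexp]
            apply mul_le_mul_of_nonneg_left _ (le_of_lt hδ0)
            linarith
    have hfm : ‖f^[m] (p k) - p k‖ ≤ δ * (Lf+1)^m := by
      have h6 := happrox m le_rfl
      rw [hpfix k] at h6
      rwa [norm_sub_rev] at h6
    have hlt : ‖f^[m] (p k) - p k‖ < c := by
      have hδc : δ ≤ c / (2 * (Lf+1)^m) := min_le_left _ _
      have hpowpos : (0:ℝ) < (Lf+1)^m := by positivity
      have hne : ((Lf+1):ℝ)^m ≠ 0 := ne_of_gt hpowpos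
      have h7 : δ * (Lf+1)^m ≤ c/2 := by
        calc δ * (Lf+1)^m ≤ (c / (2 * (Lf+1)^m)) * (Lf+1)^m :=
          mul_le_mul_of_nonneg_right hδc (le_of_lt hpowpos)
        _ = c/2 := by field_simp
      linarith
    by_contra hxs
    have hKc : p k ∈ closedBall (0:En n) r \ ball (0:En n) s :=
      ⟨ball_subset_closedBall hxball, hxs⟩
    exact absurd (hcmin _ hKc) (not_le.mpr hlt)
  -- derivative bound for g
  have hgA : ∀ x ∈ ball (0:En n) s, ‖fderiv ℂ g x - A‖ ≤ η := by
    intro x hx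
    rw [mem_ball, dist_zero_right] at hx
    have hsubr : ball x (r/2) ⊆ ball (0:En n) r := by
      intro y hy
      rw [mem_ball, dist_eq_norm] at hy
      rw [mem_ball, dist_zero_right]
      calc ‖y‖ = ‖(y - x) + x‖ := by rw [sub_add_cancel]
      _ ≤ ‖y - x‖ + ‖x‖ := norm_add_le _ _
      _ < r/2 + r/2 := by
          apply add_lt_add hy
          calc ‖x‖ < s := hx
          _ ≤ r/2 := hsr2
      _ = r := by ring
    have hrball1 : ball (0:En n) r ⊆ ball (0:En n) 1 := by
      intro z hz
      rw [mem_ball, dist_zero_right] at hz ⊢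
      linarith
    have hd : ∀ y ∈ ball x (r/2), DifferentiableAt ℂ (fun z => g z - f z) y :=
      fun y hy => (hgball y (hrball1 (hsubr hy))).sub (hfball y (hrball1 (hsubr hy)))
    have hbnd : ∀ y ∈ ball x (r/2), ‖g y - f y‖ ≤ δ := by
      intro y hy
      have := hclose y (subset_closure (hsubr hy))
      rw [dist_eq_norm] at this
      exact le_of_lt this
    have hgf : ‖fderiv ℂ g x - fderiv ℂ f x‖ ≤ η/4 := by
      have hxb : x ∈ ball x (r/2) := mem_ball_self (by linarith)
      have heq : fderiv ℂ (fun z => g z - f z) x = fderiv ℂ g x - fderiv ℂ f x :=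
        fderiv_sub (hgball x (hrball1 (hsubr hxb))) (hfball x (hrball1 (hsubr hxb)))
      apply ContinuousLinearMap.opNorm_le_bound _ (by positivity)
      intro w
      have hstep := cauchy_dir (h := fun z => g z - f z) (x₀ := x) (ρ := r/2) (M := δ)
        (by linarith) (le_of_lt hδ0) hd hbnd w
      rw [heq] at hstep
      calc ‖(fderiv ℂ g x - fderiv ℂ f x) w‖ ≤ (2*δ)/(r/2) * ‖w‖ := hstep
      _ ≤ η/4 * ‖w‖ := by
          have hδr : δ ≤ η * r / 16 := min_le_right _ _
          have hr2 : (0:ℝ) < r/2 := by linarith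
          have heq2 : η/4 * (r/2) = η*r/8 := by ring
          have h3 : (2*δ)/(r/2) ≤ η/4 := by
            rw [div_le_iff₀ hr2, heq2]
            linarith
          exact mul_le_mul_of_nonneg_right h3 (norm_nonneg w)
    have hfA : ‖fderiv ℂ f x - A‖ ≤ η/2 := hDfA x (by rw [mem_ball, dist_zero_right]; exact hx)
    calc ‖fderiv ℂ g x - A‖
        = ‖(fderiv ℂ g x - fderiv ℂ f x) + (fderiv ℂ f x - A)‖ := by rw [sub_add_sub_cancel]
    _ ≤ ‖fderiv ℂ g x - fderiv ℂ f x‖ + ‖fderiv ℂ f x - A‖ := norm_add_le _ _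
    _ ≤ η/4 + η/2 := add_le_add hgf hfA
    _ ≤ η := by linarith
  -- mean value bound
  have hGlip : ∀ x ∈ ball (0:En n) s, ∀ y ∈ ball (0:En n) s,
      ‖(g y - A y) - (g x - A x)‖ ≤ η * ‖y - x‖ := by
    intro x hx y hy
    have hGd : ∀ z ∈ ball (0:En n) s, DifferentiableAt ℂ (fun y => g y - A y) z :=
      fun z hz => (hgball z (hsball1 hz)).sub A.differentiableAt
    have hGD : ∀ z ∈ ball (0:En n) s, ‖fderiv ℂ (fun y => g y - A y) z‖ ≤ η := by
      intro z hz
      have heq : fderiv ℂ (fun y => g y - A y) z = fderiv ℂ g z - A := by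
        rw [fderiv_fun_sub (hgball z (hsball1 hz)) A.differentiableAt, A.fderiv]
      rw [heq]
      exact hgA z hz
    exact Convex.norm_image_sub_le_of_norm_fderiv_le hGd hGD (convex_ball _ _) hx hy
  -- sequence
  set v : ℕ → En n := fun k => p (k + L) - p k with hv
  have hrec : ∀ k, k < m → ‖v (k+1) - A (v k)‖ ≤ η * ‖v k‖ := by
    intro k _
    have e1 : p (k+1+L) = g (p (k+L)) := by
      simp only [hp]
      rw [show k+1+L = (k+L)+1 from by ring, Function.iterate_succ_apply']
    have e1' : p (k+1) = g (p k) := by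
      simp only [hp, Function.iterate_succ_apply']
    have e2 : v (k+1) - A (v k) = (g (p (k+L)) - A (p (k+L))) - (g (p k) - A (p k)) := by
      simp only [hv, map_sub, e1, e1']
      abel
    rw [e2]
    have := hGlip (p k) (hps k) (p (k+L)) (hps (k+L))
    simpa only [hv] using this
  have hvm : v m = v 0 := by
    simp only [hv, Nat.zero_add]
    have h1 : p (m + L) = p L := by rw [Nat.add_comm, hpm]
    have h2 : p m = p 0 := by
      have := hpm 0
      rwa [Nat.zero_add] at this
    rw [h1, h2]
  have hsum : ∑ j ∈ Finset.range e', v (j*L) = 0 := by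
    have h1 : ∀ j : ℕ, v (j*L) = p ((j+1)*L) - p (j*L) := by
      intro j
      simp only [hv]
      congr 2
      ring
    calc ∑ j ∈ Finset.range e', v (j*L)
        = ∑ j ∈ Finset.range e', (p ((j+1)*L) - p (j*L)) := by
          apply Finset.sum_congr rfl
          intro j _
          exact h1 j
    _ = p (e'*L) - p (0*L) := Finset.sum_range_sub (fun j => p (j*L)) e'
    _ = 0 := by
        have h2 : e' * L = m := by rw [hme]; ring
        have h3 : p m = p 0 := by
          have := hpm 0
          rwa [Nat.zero_add] at this
        rw [h2, Nat.zero_mul, h3, sub_self]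
  have hv0 := key_seq A m L e' hm0 hme hLfix C hC1 hCT η (le_of_lt hη0) hη1 hηs v hrec hvm hsum
  have hneq : v 0 ≠ 0 := by
    simp only [hv]
    rw [sub_ne_zero]
    intro hcontra
    exact hexact L hL0 hLm (by simpa [hp, Nat.zero_add] using hcontra)
  exact hneq hv0

end
end

section
/- Let 1 ≤ s ≤ n and let f = (f_1, …, f_n) be holomorphic in a neighborhood of 0 in ℂ^n of the form f_j(x) = λ_j x_j + x_j Σ_{i=1}^s a_{ji} x_i^{m_i} + o_j(x) for 1 ≤ j ≤ s and f_r(x) = μ_r x_r + R_r(x) for s+1 ≤ r ≤ n, where λ_1, …, λ_s are primitive m_1-th, …, m_s-th roots of unity with m_1, …, m_s mutually distinct primes, each o_j(x) = x_j h_j(x_1^{m_1}, …, x_s^{m_s}) + o'_j(x) with h_j a polynomial in x_1^{m_1}, …, x_s^{m_s} all of whose monomials have total degree ≥ 2 in these variables and o'_j a convergent power series with all terms of degree > (m_1⋯m_s)^2, and each R_r a convergent power series with all terms of degree ≥ 2. Then for every positive integer k, the k-th iterate f^k = (f_1^{(k)}, …, f_n^{(k)}), defined in a neighborhood of 0, has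 components f_j^{(k)}(x) = λ_j^k x_j + k λ_j^{k−1} x_j Σ_{i=1}^s a_{ji} x_i^{m_i} + o_j^{(k)}(x) for 1 ≤ j ≤ s, where o_j^{(k)} has the same form as o_j above (namely x_j times a polynomial in x_1^{m_1}, …, x_s^{m_s} of total degree ≥ 2 in these variables, plus a power series with all terms of degree > (m_1⋯m_s)^2), and f_r^{(k)}(x) = μ_r^k x_r + R_r^{(k)}(x) for s+1 ≤ r ≤ n, where R_r^{(k)} is a power series with all terms of degree ≥ 2. -/
open Metric Filter Function

noncomputable section

open Asymptotics in
/-- `R` is (near `0`) a convergent power series all of whose terms have degree `≥ d`. -/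
def HigherOrderAt (n : ℕ) (R : En n → ℂ) (d : ℕ) : Prop :=
  AnalyticAt ℂ R 0 ∧ R =O[nhds (0 : En n)] fun x => ‖x‖ ^ d

/-- `h` is a polynomial in `s` variables all of whose monomials have total degree `≥ 2`. -/
def PolyDegTwo (s : ℕ) (h : (Fin s → ℂ) → ℂ) : Prop :=
  ∃ (S : Finset (Fin s → ℕ)) (c : (Fin s → ℕ) → ℂ),
    (∀ α ∈ S, 2 ≤ ∑ i, α i) ∧ ∀ y, h y = ∑ α ∈ S, c α * ∏ i, y i ^ α i

/-- Condition (4) on the remainder term `oj`: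
`oj x = x_j · h(x_1^{m_1}, …, x_s^{m_s}) + o'(x)` with `h` a polynomial in
`x_1^{m_1}, …, x_s^{m_s}` of total degree `≥ 2` in these variables and `o'` a power
series with all terms of degree `> (m_1 ⋯ m_s)^2`. -/
def CondO (n s : ℕ) (hsn : s ≤ n) (m : Fin s → ℕ) (oj : En n → ℂ) (j : Fin s) : Prop :=
  ∃ h : (Fin s → ℂ) → ℂ, PolyDegTwo s h ∧
    ∃ o' : En n → ℂ, HigherOrderAt n o' ((∏ i, m i) ^ 2 + 1) ∧
      ∀ x : En n,
        oj x = x (Fin.castLE hsn j) * h (fun i => x (Fin.castLE hsn i) ^ m i) + o' x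


open Asymptotics

def P1 (s d : ℕ) (p : (Fin s → ℂ) → ℂ) : Prop :=
  ∃ (S : Finset (Fin s → ℕ)) (c : (Fin s → ℕ) → ℂ),
    (∀ α ∈ S, d ≤ ∑ i, α i) ∧ ∀ y, p y = ∑ α ∈ S, c α * ∏ i, y i ^ α i

namespace P1
variable {s d e : ℕ} {p q : (Fin s → ℂ) → ℂ}

lemma zero : P1 s d (fun _ => 0) := ⟨∅, fun _ => 0, by simp, by simp⟩

lemma const (c : ℂ) : P1 s 0 (fun _ => c) :=
  ⟨{fun _ => 0}, fun _ => c, by simp, fun y => by simp⟩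

lemma coord (i : Fin s) : P1 s 1 (fun y => y i) := by
  refine ⟨{Pi.single i 1}, fun _ => 1, ?_, fun y => ?_⟩
  · intro α hα; simp only [Finset.mem_singleton] at hα; subst hα
    simp [Finset.sum_pi_single]
  · rw [Finset.sum_singleton, one_mul, Finset.prod_eq_single i]
    · simp
    · intro b _ hb; simp [Pi.single_eq_of_ne hb]
    · simp

lemma mono (hp : P1 s d p) (hde : e ≤ d) : P1 s e p := by
  obtain ⟨S, c, hS, h⟩ := hp
  exact ⟨S, c, fun α hα => le_trans hde (hS α hα), h⟩

lemma add (hp : P1 s d p) (hq : P1 s d q) : P1 s d (fun y => p y + q y) := by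
  obtain ⟨S1, c1, hS1, h1⟩ := hp
  obtain ⟨S2, c2, hS2, h2⟩ := hq
  refine ⟨S1 ∪ S2,
    fun α => (if α ∈ S1 then c1 α else 0) + (if α ∈ S2 then c2 α else 0), ?_, fun y => ?_⟩
  · intro α hα; rcases Finset.mem_union.1 hα with h | h
    exacts [hS1 α h, hS2 α h]
  · have e1 : ∑ α ∈ S1 ∪ S2, (if α ∈ S1 then c1 α else 0) * ∏ i, y i ^ α i
        = ∑ α ∈ S1, c1 α * ∏ i, y i ^ α i := by
      rw [← Finset.sum_subset Finset.subset_union_left]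
      · exact Finset.sum_congr rfl fun α hα => by simp [hα]
      · intro α _ hα; simp [hα]
    have e2 : ∑ α ∈ S1 ∪ S2, (if α ∈ S2 then c2 α else 0) * ∏ i, y i ^ α i
        = ∑ α ∈ S2, c2 α * ∏ i, y i ^ α i := by
      rw [← Finset.sum_subset Finset.subset_union_right]
      · exact Finset.sum_congr rfl fun α hα => by simp [hα]
      · intro α _ hα; simp [hα]
    simp only [h1, h2, ← e1, ← e2, ← Finset.sum_add_distrib]
    exact Finset.sum_congr rfl fun α _ => by ring

lemma smul (c : ℂ) (hp : P1 s d p) : P1 s d (fun y => c * p y) := by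
  obtain ⟨S, c1, hS, h⟩ := hp
  refine ⟨S, fun α => c * c1 α, hS, fun y => ?_⟩
  show c * p y = _
  rw [h, Finset.mul_sum]; exact Finset.sum_congr rfl fun α _ => by ring

lemma mul (hp : P1 s d p) (hq : P1 s e q) : P1 s (d + e) (fun y => p y * q y) := by
  obtain ⟨S1, c1, hS1, h1⟩ := hp
  obtain ⟨S2, c2, hS2, h2⟩ := hq
  refine ⟨(S1 ×ˢ S2).image (fun ab => ab.1 + ab.2),
    fun γ => ∑ ab ∈ (S1 ×ˢ S2).filter (fun ab => ab.1 + ab.2 = γ), c1 ab.1 * c2 ab.2,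
    ?_, fun y => ?_⟩
  · intro γ hγ
    simp only [Finset.mem_image, Finset.mem_product] at hγ
    obtain ⟨⟨α, β⟩, ⟨hα, hβ⟩, rfl⟩ := hγ
    have : ∑ i, (α + β) i = (∑ i, α i) + ∑ i, β i := by
      simp [Pi.add_apply, Finset.sum_add_distrib]
    rw [this]
    exact add_le_add (hS1 α hα) (hS2 β hβ)
  · show p y * q y = _
    rw [h1, h2, Finset.sum_mul_sum, ← Finset.sum_product']
    rw [← Finset.sum_fiberwise_of_maps_to (g := fun ab => ab.1 + ab.2)
      (fun ab hab => Finset.mem_image_of_mem _ hab)]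
    refine Finset.sum_congr rfl fun γ _ => ?_
    rw [Finset.sum_mul]
    refine Finset.sum_congr rfl fun ab hab => ?_
    simp only [Finset.mem_filter] at hab
    rw [← hab.2]
    have : ∏ i, y i ^ (ab.1 + ab.2) i = (∏ i, y i ^ ab.1 i) * ∏ i, y i ^ ab.2 i := by
      rw [← Finset.prod_mul_distrib]
      exact Finset.prod_congr rfl fun i _ => by rw [Pi.add_apply, pow_add]
    rw [this]; ring

lemma sum {ι : Type*} (T : Finset ι) (F : ι → (Fin s → ℂ) → ℂ)
    (hF : ∀ t ∈ T, P1 s d (F t)) : P1 s d (fun y => ∑ t ∈ T, F t y) := by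
  classical
  induction T using Finset.induction_on with
  | empty => simpa using (zero (s := s) (d := d))
  | @insert t T ht ih =>
    have := (hF _ (Finset.mem_insert_self _ _)).add
      (ih (fun u hu => hF u (Finset.mem_insert_of_mem hu)))
    simpa [Finset.sum_insert ht] using this

lemma pow (hp : P1 s d p) : ∀ t : ℕ, P1 s (d * t) (fun y => p y ^ t)
  | 0 => by simpa using const 1
  | (t+1) => by
    have := ((pow hp t).mul hp)
    have h2 : d * t + d = d * (t+1) := by ring
    rw [h2] at this
    simpa [pow_succ] using this

end P1

namespace HO
open Asymptotics
variable {n d : ℕ} {u v b : En n → ℂ}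

lemma congr' (h : ∀ x, u x = v x) (hv : HigherOrderAt n v d) : HigherOrderAt n u d := by
  have : u = v := funext h
  rw [this]; exact hv

lemma econgr (h : u =ᶠ[nhds (0:En n)] v) (hv : HigherOrderAt n v d) : HigherOrderAt n u d :=
  ⟨hv.1.congr h.symm, hv.2.congr' h.symm (EventuallyEq.refl _ _)⟩

lemma zero : HigherOrderAt n (fun _ => 0) d :=
  ⟨analyticAt_const, isBigO_zero _ _⟩

lemma add (hu : HigherOrderAt n u d) (hv : HigherOrderAt n v d) :
    HigherOrderAt n (fun x => u x + v x) d :=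
  ⟨hu.1.add hv.1, hu.2.add hv.2⟩

lemma mul_analytic (hb : AnalyticAt ℂ b 0) (hu : HigherOrderAt n u d) :
    HigherOrderAt n (fun x => b x * u x) d := by
  refine ⟨hb.mul hu.1, ?_⟩
  have h1 : b =O[nhds (0:En n)] (fun _ => (1:ℝ)) := hb.continuousAt.isBigO_one ℝ
  simpa using h1.mul hu.2

lemma smul (c : ℂ) (hu : HigherOrderAt n u d) : HigherOrderAt n (fun x => c * u x) d :=
  mul_analytic analyticAt_const hu

lemma analytic_mul (hu : HigherOrderAt n u d) (hb : AnalyticAt ℂ b 0) :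
    HigherOrderAt n (fun x => u x * b x) d :=
  congr' (fun x => mul_comm _ _) (mul_analytic hb hu)

lemma sum {ι : Type*} (T : Finset ι) (F : ι → En n → ℂ)
    (hF : ∀ t ∈ T, HigherOrderAt n (F t) d) :
    HigherOrderAt n (fun x => ∑ t ∈ T, F t x) d := by
  classical
  induction T using Finset.induction_on with
  | empty => simpa using (zero (n := n) (d := d))
  | @insert t T ht ih =>
    have := add (hF _ (Finset.mem_insert_self _ _))
      (ih (fun w hw => hF w (Finset.mem_insert_of_mem hw)))
    simpa [Finset.sum_insert ht] using this

lemma pow_pos (hu : HigherOrderAt n u d) {t : ℕ} (ht : 1 ≤ t) :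
    HigherOrderAt n (fun x => u x ^ t) d := by
  have : (fun x => u x ^ t) = fun x => u x ^ (t - 1) * u x := by
    funext x; rw [← pow_succ, Nat.sub_add_cancel ht]
  rw [this]
  exact mul_analytic (hu.1.pow _) hu

lemma val_zero (hu : HigherOrderAt n u d) (hd : 1 ≤ d) : u 0 = 0 := by
  obtain ⟨C, hC⟩ := hu.2.bound
  have h0 := hC.self_of_nhds
  simp only [norm_zero, zero_pow (by omega : d ≠ 0)] at h0
  simpa using norm_le_zero_iff.1 (by simpa using h0)

lemma comp (hu : HigherOrderAt n u d) {g : En n → En n}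
    (hg : AnalyticAt ℂ g 0) (hg0 : g 0 = 0) :
    HigherOrderAt n (fun x => u (g x)) d := by
  have hgt : Filter.Tendsto g (nhds 0) (nhds (0 : En n)) := by
    have := hg.continuousAt.tendsto
    rwa [hg0] at this
  constructor
  · have h1 : AnalyticAt ℂ u (g 0) := by rw [hg0]; exact hu.1
    exact h1.comp hg
  · have h1 : (fun x => u (g x)) =O[nhds (0:En n)] fun x => ‖g x‖ ^ d :=
      (hu.2.comp_tendsto hgt)
    have h2 : g =O[nhds (0:En n)] (fun x => x) := by
      simpa [hg0] using hg.differentiableAt.isBigO_sub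
    exact h1.trans ((h2.norm_norm).pow d)

lemma mono (hu : HigherOrderAt n u d) {e : ℕ} (hed : e ≤ d) : HigherOrderAt n u e := by
  refine ⟨hu.1, hu.2.trans ?_⟩
  refine IsBigO.of_bound 1 ?_
  have hb : ∀ᶠ x : En n in nhds 0, ‖x‖ ≤ 1 := by
    filter_upwards [Metric.ball_mem_nhds (0 : En n) one_pos] with x hx
    rw [Metric.mem_ball, dist_zero_right] at hx
    exact hx.le
  filter_upwards [hb] with x hx
  have : ‖x‖ ^ d ≤ ‖x‖ ^ e := pow_le_pow_of_le_one (norm_nonneg _) hx hed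
  simpa [abs_of_nonneg (pow_nonneg (norm_nonneg x) _)] using this

end HO

lemma an_coord {n : ℕ} (r : Fin n) : AnalyticAt ℂ (fun x : En n => x r) 0 :=
  (EuclideanSpace.proj (𝕜 := ℂ) r).analyticAt 0

section Classes
variable {n s : ℕ}

def Yv (hsn : s ≤ n) (m : Fin s → ℕ) (x : En n) : Fin s → ℂ :=
  fun i => x (Fin.castLE hsn i) ^ m i

lemma P1.analyticYv {d : ℕ} {p : (Fin s → ℂ) → ℂ} (hsn : s ≤ n) (m : Fin s → ℕ)
    (hp : P1 s d p) : AnalyticAt ℂ (fun x : En n => p (Yv hsn m x)) 0 := by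
  obtain ⟨S, c, _, h⟩ := hp
  have hrw : (fun x : En n => p (Yv hsn m x))
      = fun x => ∑ α ∈ S, c α * ∏ i, (x (Fin.castLE hsn i) ^ m i) ^ α i := by
    funext x; exact h _
  rw [hrw]
  exact Finset.analyticAt_fun_sum _ fun α _ =>
    analyticAt_const.mul (Finset.analyticAt_fun_prod _ fun i _ => ((an_coord _).pow _).pow _)

lemma Yv_def (hsn : s ≤ n) (m : Fin s → ℕ) (x : En n) :
    Yv hsn m x = fun i => x (Fin.castLE hsn i) ^ m i := rfl

def EPY (hsn : s ≤ n) (m : Fin s → ℕ) (d : ℕ) (u : En n → ℂ) : Prop :=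
  ∃ p e, P1 s d p ∧ HigherOrderAt n e ((∏ i, m i) ^ 2 + 1) ∧
    u =ᶠ[nhds (0 : En n)] fun x => p (Yv hsn m x) + e x

def XPE (hsn : s ≤ n) (m : Fin s → ℕ) (j : Fin s) (d : ℕ) (u : En n → ℂ) : Prop :=
  ∃ q e, P1 s d q ∧ HigherOrderAt n e ((∏ i, m i) ^ 2 + 1) ∧
    u =ᶠ[nhds (0 : En n)] fun x => x (Fin.castLE hsn j) * q (Yv hsn m x) + e x

variable {hsn : s ≤ n} {m : Fin s → ℕ} {d e : ℕ} {u v : En n → ℂ}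

namespace EPY

lemma econgr (h : u =ᶠ[nhds (0:En n)] v) (hv : EPY hsn m d v) : EPY hsn m d u := by
  obtain ⟨p, e, h1, h2, h3⟩ := hv
  exact ⟨p, e, h1, h2, h.trans h3⟩

lemma of_E (he : HigherOrderAt n u ((∏ i, m i) ^ 2 + 1)) : EPY hsn m d u :=
  ⟨fun _ => 0, u, P1.zero, he, Filter.Eventually.of_forall fun x => by simp⟩

lemma of_P {p : (Fin s → ℂ) → ℂ} (hp : P1 s d p) :
    EPY hsn m d (fun x => p (Yv hsn m x)) :=
  ⟨p, fun _ => 0, hp, HO.zero, Filter.Eventually.of_forall fun x => by simp⟩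

lemma analytic (hu : EPY hsn m d u) : AnalyticAt ℂ u 0 := by
  obtain ⟨p, e, h1, h2, h3⟩ := hu
  exact ((h1.analyticYv hsn m).add h2.1).congr h3.symm

lemma add (hu : EPY hsn m d u) (hv : EPY hsn m d v) : EPY hsn m d (fun x => u x + v x) := by
  obtain ⟨p, e1, hp, he1, h1⟩ := hu
  obtain ⟨q, e2, hq, he2, h2⟩ := hv
  refine ⟨fun y => p y + q y, fun x => e1 x + e2 x, hp.add hq, HO.add he1 he2, ?_⟩
  filter_upwards [h1, h2] with x hx1 hx2
  simp only [hx1, hx2]; ring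

lemma smul (c : ℂ) (hu : EPY hsn m d u) : EPY hsn m d (fun x => c * u x) := by
  obtain ⟨p, e1, hp, he1, h1⟩ := hu
  refine ⟨fun y => c * p y, fun x => c * e1 x, hp.smul c, HO.smul c he1, ?_⟩
  filter_upwards [h1] with x hx1
  simp only [hx1]; ring

lemma mono (hu : EPY hsn m d u) (hed : e ≤ d) : EPY hsn m e u := by
  obtain ⟨p, e1, hp, he1, h1⟩ := hu
  exact ⟨p, e1, hp.mono hed, he1, h1⟩

lemma mul (hu : EPY hsn m d u) (hv : EPY hsn m e v) :
    EPY hsn m (d + e) (fun x => u x * v x) := by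
  obtain ⟨p, e1, hp, he1, h1⟩ := hu
  obtain ⟨q, e2, hq, he2, h2⟩ := hv
  refine ⟨fun y => p y * q y,
    fun x => p (Yv hsn m x) * e2 x + e1 x * q (Yv hsn m x) + e1 x * e2 x,
    hp.mul hq, ?_, ?_⟩
  · exact (HO.add (HO.add (HO.mul_analytic (hp.analyticYv hsn m) he2)
      (HO.analytic_mul he1 (hq.analyticYv hsn m))) (HO.analytic_mul he1 he2.1))
  · filter_upwards [h1, h2] with x hx1 hx2
    simp only [hx1, hx2]; ring

lemma one : EPY hsn m 0 (fun _ => 1) := of_P (P1.const 1)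

lemma pow (hu : EPY hsn m d u) : ∀ t : ℕ, EPY hsn m (d * t) (fun x => u x ^ t)
  | 0 => by simpa using (one (hsn := hsn) (m := m))
  | (t+1) => by
    have := (pow hu t).mul hu
    have h2 : d * t + d = d * (t+1) := by ring
    rw [h2] at this
    simpa [pow_succ] using this

lemma sum {ι : Type*} (T : Finset ι) (F : ι → En n → ℂ)
    (hF : ∀ t ∈ T, EPY hsn m d (F t)) : EPY hsn m d (fun x => ∑ t ∈ T, F t x) := by
  classical
  induction T using Finset.induction_on with
  | empty => simpa using (of_E (HO.zero) : EPY hsn m d (fun _ => 0))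
  | @insert t T ht ih =>
    have := add (hF _ (Finset.mem_insert_self _ _))
      (ih (fun w hw => hF w (Finset.mem_insert_of_mem hw)))
    simpa [Finset.sum_insert ht] using this

lemma prod {ι : Type*} (T : Finset ι) (F : ι → En n → ℂ) (dd : ι → ℕ)
    (hF : ∀ t ∈ T, EPY hsn m (dd t) (F t)) :
    EPY hsn m (∑ t ∈ T, dd t) (fun x => ∏ t ∈ T, F t x) := by
  classical
  induction T using Finset.induction_on with
  | empty => simpa using (one (hsn := hsn) (m := m))
  | @insert t T ht ih =>
    have := (hF _ (Finset.mem_insert_self _ _)).mul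
      (ih (fun w hw => hF w (Finset.mem_insert_of_mem hw)))
    simpa [Finset.sum_insert ht, Finset.prod_insert ht] using this

lemma subst {p : (Fin s → ℂ) → ℂ} (hp : P1 s d p) {w : En n → Fin s → ℂ}
    (hw : ∀ i, EPY hsn m 1 (fun x => w x i)) : EPY hsn m d (fun x => p (w x)) := by
  obtain ⟨S, c, hS, hrep⟩ := hp
  have hrw : (fun x => p (w x)) = fun x => ∑ α ∈ S, c α * ∏ i, w x i ^ α i := by
    funext x; exact hrep _
  rw [hrw]
  refine sum _ _ fun α hα => smul _ ?_
  have hprod := prod (Finset.univ) (fun i x => w x i ^ α i) (fun i => 1 * α i)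
    (fun i _ => (hw i).pow (α i))
  refine (hprod.mono ?_)
  simpa using hS α hα

end EPY

namespace XPE

lemma econgr {j : Fin s} (h : u =ᶠ[nhds (0:En n)] v) (hv : XPE hsn m j d v) :
    XPE hsn m j d u := by
  obtain ⟨p, e, h1, h2, h3⟩ := hv
  exact ⟨p, e, h1, h2, h.trans h3⟩

lemma of_E {j : Fin s} (he : HigherOrderAt n u ((∏ i, m i) ^ 2 + 1)) : XPE hsn m j d u :=
  ⟨fun _ => 0, u, P1.zero, he, Filter.Eventually.of_forall fun x => by simp⟩

lemma of_XP {j : Fin s} {q : (Fin s → ℂ) → ℂ} (hq : P1 s d q) :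
    XPE hsn m j d (fun x => x (Fin.castLE hsn j) * q (Yv hsn m x)) :=
  ⟨q, fun _ => 0, hq, HO.zero, Filter.Eventually.of_forall fun x => by simp⟩

lemma add {j : Fin s} (hu : XPE hsn m j d u) (hv : XPE hsn m j d v) :
    XPE hsn m j d (fun x => u x + v x) := by
  obtain ⟨p, e1, hp, he1, h1⟩ := hu
  obtain ⟨q, e2, hq, he2, h2⟩ := hv
  refine ⟨fun y => p y + q y, fun x => e1 x + e2 x, hp.add hq, HO.add he1 he2, ?_⟩
  filter_upwards [h1, h2] with x hx1 hx2
  simp only [hx1, hx2]; ring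

lemma smul {j : Fin s} (c : ℂ) (hu : XPE hsn m j d u) : XPE hsn m j d (fun x => c * u x) := by
  obtain ⟨p, e1, hp, he1, h1⟩ := hu
  refine ⟨fun y => c * p y, fun x => c * e1 x, hp.smul c, HO.smul c he1, ?_⟩
  filter_upwards [h1] with x hx1
  simp only [hx1]; ring

lemma mono {j : Fin s} (hu : XPE hsn m j d u) (hed : e ≤ d) : XPE hsn m j e u := by
  obtain ⟨p, e1, hp, he1, h1⟩ := hu
  exact ⟨p, e1, hp.mono hed, he1, h1⟩

lemma mul_EPY {j : Fin s} (hu : XPE hsn m j d u) (hv : EPY hsn m e v) :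
    XPE hsn m j (d + e) (fun x => u x * v x) := by
  obtain ⟨p, e1, hp, he1, h1⟩ := hu
  obtain ⟨q, e2, hq, he2, h2⟩ := hv
  refine ⟨fun y => p y * q y,
    fun x => x (Fin.castLE hsn j) * p (Yv hsn m x) * e2 x
      + e1 x * (q (Yv hsn m x) + e2 x),
    hp.mul hq, ?_, ?_⟩
  · exact HO.add (HO.mul_analytic ((an_coord _).mul (hp.analyticYv hsn m)) he2)
      (HO.analytic_mul he1 ((hq.analyticYv hsn m).add he2.1))
  · filter_upwards [h1, h2] with x hx1 hx2
    simp only [hx1, hx2]; ring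

end XPE
end Classes

lemma P1.pcongr {s d : ℕ} {p q : (Fin s → ℂ) → ℂ} (h : ∀ y, p y = q y) (hq : P1 s d q) :
    P1 s d p := by
  have : p = q := funext h
  rw [this]; exact hq

def pS (s : ℕ) (a : Fin s → Fin s → ℂ) (j : Fin s) (y : Fin s → ℂ) : ℂ := ∑ i, a j i * y i

lemma pS_P1 {s : ℕ} (a : Fin s → Fin s → ℂ) (j : Fin s) : P1 s 1 (pS s a j) :=
  P1.sum Finset.univ (fun i y => a j i * y i) (fun i _ => P1.smul _ (P1.coord i))

lemma powstep {n s : ℕ} {hsn : s ≤ n} {m : Fin s → ℕ} {g : En n → En n} {i : Fin s}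
    {c : ℂ} {Q : (Fin s → ℂ) → ℂ} {e : En n → ℂ}
    (hc : c ^ m i = 1) (hm : 1 ≤ m i)
    (hQ : P1 s 1 Q) (he : HigherOrderAt n e ((∏ l, m l) ^ 2 + 1))
    (hg : (fun x => g x (Fin.castLE hsn i)) =ᶠ[nhds (0:En n)]
        fun x => x (Fin.castLE hsn i) * (c + Q (Yv hsn m x)) + e x) :
    ∃ v, EPY hsn m 2 v ∧
      (fun x => g x (Fin.castLE hsn i) ^ m i) =ᶠ[nhds (0:En n)]
        fun x => Yv hsn m x i + v x := by
  refine ⟨fun x => Yv hsn m x i *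
      (∑ t ∈ Finset.range (m i), c ^ t * Q (Yv hsn m x) ^ (m i - t) * ((m i).choose t : ℂ))
      + ∑ t ∈ Finset.range (m i),
          (x (Fin.castLE hsn i) * (c + Q (Yv hsn m x))) ^ t * e x ^ (m i - t)
            * ((m i).choose t : ℂ), ?_, ?_⟩
  · have hρ : P1 s 1 (fun y => ∑ t ∈ Finset.range (m i),
        c ^ t * Q y ^ (m i - t) * ((m i).choose t : ℂ)) := by
      refine P1.sum _ _ fun t ht => ?_
      have htm : t < m i := Finset.mem_range.1 ht
      refine P1.pcongr (fun y => by ring) (P1.smul (c ^ t * ((m i).choose t : ℂ))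
        ((hQ.pow (m i - t)).mono (by omega)))
    have hEv : HigherOrderAt n (fun x => ∑ t ∈ Finset.range (m i),
        (x (Fin.castLE hsn i) * (c + Q (Yv hsn m x))) ^ t * e x ^ (m i - t)
          * ((m i).choose t : ℂ)) ((∏ l, m l) ^ 2 + 1) := by
      refine HO.sum _ _ fun t ht => ?_
      have htm : t < m i := Finset.mem_range.1 ht
      refine HO.congr' (fun x => ?_) (HO.mul_analytic
        (b := fun x => ((m i).choose t : ℂ) *
          (x (Fin.castLE hsn i) * (c + Q (Yv hsn m x))) ^ t * e x ^ (m i - t - 1))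
        ((analyticAt_const.mul (((an_coord _).mul
          (analyticAt_const.add (hQ.analyticYv hsn m))).pow t)).mul (he.1.pow _)) he)
      have hsub : e x ^ (m i - t) = e x ^ (m i - t - 1) * e x := by
        rw [← pow_succ, Nat.sub_add_cancel (by omega)]
      rw [hsub]; ring
    exact EPY.add (EPY.of_P ((P1.coord i).mul hρ)) (EPY.of_E hEv)
  · filter_upwards [hg] with x hx
    have hYv : Yv hsn m x i = x (Fin.castLE hsn i) ^ m i := rfl
    have hA : (x (Fin.castLE hsn i) * (c + Q (Yv hsn m x))) ^ m i
        = Yv hsn m x i + Yv hsn m x i * (∑ t ∈ Finset.range (m i),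
            c ^ t * Q (Yv hsn m x) ^ (m i - t) * ((m i).choose t : ℂ)) := by
      rw [mul_pow, add_pow, Finset.sum_range_succ, Nat.sub_self, pow_zero,
        Nat.choose_self, Nat.cast_one, hYv]
      rw [hc]; ring
    show g x (Fin.castLE hsn i) ^ m i = _
    rw [hx, add_pow, Finset.sum_range_succ, Nat.sub_self, pow_zero,
      Nat.choose_self, Nat.cast_one, hA]
    ring

lemma XPE.x_mul_EPY {n s : ℕ} {hsn : s ≤ n} {m : Fin s → ℕ} {d : ℕ} {v : En n → ℂ}
    {j : Fin s} (hv : EPY hsn m d v) :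
    XPE hsn m j d (fun x => x (Fin.castLE hsn j) * v x) := by
  obtain ⟨p, e, hp, he, hev⟩ := hv
  refine ⟨p, fun x => x (Fin.castLE hsn j) * e x, hp, HO.mul_analytic (an_coord _) he, ?_⟩
  filter_upwards [hev] with x hx
  rw [hx]; ring

theorem statement15 (n s : ℕ) (hs : 0 < s) (hsn : s ≤ n)
    (f : En n → En n) (lam : Fin s → ℂ) (m : Fin s → ℕ)
    (a : Fin s → Fin s → ℂ) (mu : Fin n → ℂ)
    (o : Fin s → En n → ℂ) (R : Fin n → En n → ℂ)
    (hroot : ∀ j, PrimRoot (lam j) (m j))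
    (hprime : ∀ j, (m j).Prime) (hdist : Function.Injective m)
    (ho : ∀ j, CondO n s hsn m (o j) j)
    (hR : ∀ r : Fin n, s ≤ (r : ℕ) → HigherOrderAt n (R r) 2)
    (hform1 : ∀ j : Fin s, ∀ᶠ x in nhds (0 : En n),
      f x (Fin.castLE hsn j) =
        lam j * x (Fin.castLE hsn j) +
          x (Fin.castLE hsn j) * ∑ i, a j i * x (Fin.castLE hsn i) ^ m i + o j x)
    (hform2 : ∀ r : Fin n, s ≤ (r : ℕ) → ∀ᶠ x in nhds (0 : En n),
      f x r = mu r * x r + R r x)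
    (hfhol : ∃ U : Set (En n), IsOpen U ∧ (0 : En n) ∈ U ∧ DifferentiableOn ℂ f U)
    (k : ℕ) (hk : 0 < k) :
    ∃ (ok : Fin s → En n → ℂ) (Rk : Fin n → En n → ℂ),
      (∀ j, CondO n s hsn m (ok j) j) ∧
      (∀ r : Fin n, s ≤ (r : ℕ) → HigherOrderAt n (Rk r) 2) ∧
      (∀ j : Fin s, ∀ᶠ x in nhds (0 : En n),
        f^[k] x (Fin.castLE hsn j) =
          lam j ^ k * x (Fin.castLE hsn j) +
            (k : ℂ) * lam j ^ (k - 1) * x (Fin.castLE hsn j) *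
              ∑ i, a j i * x (Fin.castLE hsn i) ^ m i + ok j x) ∧
      (∀ r : Fin n, s ≤ (r : ℕ) → ∀ᶠ x in nhds (0 : En n),
        f^[k] x r = mu r ^ k * x r + Rk r x) := by
  choose oh ohP oe oeH orep using ho
  have ohP1 : ∀ j, P1 s 2 (oh j) := ohP
  have hoan : ∀ j, AnalyticAt ℂ (o j) 0 := by
    intro j
    have hrw : o j = fun x => x (Fin.castLE hsn j) * oh j (Yv hsn m x) + oe j x :=
      funext (orep j)
    rw [hrw]
    exact ((an_coord _).mul ((ohP1 j).analyticYv hsn m)).add (oeH j).1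
  have hfj_an : ∀ j : Fin s, AnalyticAt ℂ (fun x => f x (Fin.castLE hsn j)) 0 := by
    intro j
    have hsum : AnalyticAt ℂ
        (fun x : En n => ∑ i, a j i * x (Fin.castLE hsn i) ^ m i) 0 :=
      Finset.analyticAt_fun_sum _ fun i _ => analyticAt_const.mul ((an_coord _).pow _)
    exact (((analyticAt_const.mul (an_coord _)).add
      ((an_coord _).mul hsum)).add (hoan j)).congr (Filter.EventuallyEq.symm (hform1 j))
  have hfr_an : ∀ r : Fin n, s ≤ (r : ℕ) → AnalyticAt ℂ (fun x => f x r) 0 := by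
    intro r hr
    exact ((analyticAt_const.mul (an_coord _)).add (hR r hr).1).congr
      (Filter.EventuallyEq.symm (hform2 r hr))
  have hfall : ∀ r : Fin n, AnalyticAt ℂ (fun x => f x r) 0 := by
    intro r
    by_cases hr : (r : ℕ) < s
    · have hre : r = Fin.castLE hsn ⟨(r : ℕ), hr⟩ := Fin.ext rfl
      rw [hre]
      exact hfj_an ⟨(r : ℕ), hr⟩
    · exact hfr_an r (le_of_not_gt hr)
  have hfa : AnalyticAt ℂ f 0 := by
    have h1 : AnalyticAt ℂ (fun x : En n => fun r : Fin n => f x r) 0 :=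
      AnalyticAt.pi hfall
    have h2 := (((PiLp.continuousLinearEquiv 2 ℂ (fun _ : Fin n => ℂ)).symm :
        (Fin n → ℂ) →L[ℂ] En n).analyticAt _).comp h1
    have h3 : ((PiLp.continuousLinearEquiv 2 ℂ (fun _ : Fin n => ℂ)).symm :
        (Fin n → ℂ) →L[ℂ] En n) ∘ (fun x : En n => fun r : Fin n => f x r) = f := rfl
    rwa [h3] at h2
  have hf0 : f 0 = 0 := by
    have hoe0 : ∀ j, oe j 0 = 0 := fun j => HO.val_zero (oeH j) (Nat.le_add_left 1 _)
    have hR0 : ∀ r : Fin n, s ≤ (r : ℕ) → R r 0 = 0 := fun r hr =>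
      HO.val_zero (hR r hr) (by norm_num)
    ext r
    by_cases hr : (r : ℕ) < s
    · have hre : r = Fin.castLE hsn ⟨(r : ℕ), hr⟩ := Fin.ext rfl
      have hj := (hform1 ⟨(r : ℕ), hr⟩).self_of_nhds
      rw [orep ⟨(r : ℕ), hr⟩ 0] at hj
      have h0c : ∀ q : Fin n, (0 : En n) q = 0 := fun q => rfl
      rw [hre]
      rw [hj, h0c, hoe0]
      simp
    · have hj := (hform2 r (le_of_not_gt hr)).self_of_nhds
      have h0c : (0 : En n) r = 0 := rfl
      rw [hj, h0c, hR0 r (le_of_not_gt hr)]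
      simp
  have hiter : ∀ K : ℕ, AnalyticAt ℂ (f^[K]) 0 ∧ f^[K] 0 = 0 := by
    intro K
    induction K with
    | zero =>
      refine ⟨?_, rfl⟩
      rw [Function.iterate_zero]
      exact analyticAt_id
    | succ K ih =>
      rw [Function.iterate_succ']
      refine ⟨?_, ?_⟩
      · have h4 : AnalyticAt ℂ f (f^[K] 0) := by rw [ih.2]; exact hfa
        exact h4.comp ih.1
      · show f (f^[K] 0) = 0
        rw [ih.2, hf0]
  -- main induction
  induction k, hk using Nat.le_induction with
  | base =>
    refine ⟨o, R, fun j => ⟨oh j, ohP j, oe j, oeH j, orep j⟩, hR, ?_, ?_⟩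
    · intro j
      filter_upwards [hform1 j] with x hx
      rw [Function.iterate_one, hx]
      norm_num
    · intro r hr
      filter_upwards [hform2 r hr] with x hx
      rw [Function.iterate_one, hx]
      norm_num
  | succ k hk1 IH =>
    obtain ⟨K1, rfl⟩ : ∃ K1, k = K1 + 1 := ⟨k - 1, (Nat.succ_pred_eq_of_pos hk1).symm⟩
    obtain ⟨ok, Rk, hokC, hRkH, hF1, hF2⟩ := IH
    simp only [Nat.add_sub_cancel] at hF1
    have hga := (hiter (K1 + 1)).1
    have hg0 := (hiter (K1 + 1)).2
    have hgt : Filter.Tendsto (f^[K1 + 1]) (nhds 0) (nhds (0 : En n)) := by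
      have h1 := hga.continuousAt.tendsto
      rwa [hg0] at h1
    choose okh okhP oke okeH okrep using hokC
    have okhP1 : ∀ j, P1 s 2 (okh j) := okhP
    have hQ1 : ∀ i : Fin s, P1 s 1
        (fun y => ((K1 + 1 : ℕ) : ℂ) * lam i ^ K1 * pS s a i y + okh i y) := fun i =>
      (P1.smul _ (pS_P1 a i)).add ((okhP1 i).mono one_le_two)
    have hgdec : ∀ i : Fin s, (fun x => f^[K1 + 1] x (Fin.castLE hsn i)) =ᶠ[nhds (0:En n)]
        fun x => x (Fin.castLE hsn i) *
          (lam i ^ (K1 + 1) +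
            (((K1 + 1 : ℕ) : ℂ) * lam i ^ K1 * pS s a i (Yv hsn m x) + okh i (Yv hsn m x)))
          + oke i x := by
      intro i
      filter_upwards [hF1 i] with x hx
      rw [hx, okrep i x]
      simp only [pS, Yv_def]
      ring
    have hpow : ∀ i : Fin s, ∃ v, EPY hsn m 2 v ∧
        (fun x => f^[K1 + 1] x (Fin.castLE hsn i) ^ m i) =ᶠ[nhds (0:En n)]
          fun x => Yv hsn m x i + v x := by
      intro i
      have hc : (lam i ^ (K1 + 1)) ^ m i = 1 := by
        rw [← pow_mul, mul_comm, pow_mul, (hroot i).1, one_pow]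
      exact powstep (Q := fun y => ((K1 + 1 : ℕ) : ℂ) * lam i ^ K1 * pS s a i y + okh i y)
        hc (hprime i).pos (hQ1 i) (okeH i) (hgdec i)
    choose v hv1 hv2 using hpow
    have hall : ∀ᶠ x in nhds (0:En n), ∀ i,
        f^[K1 + 1] x (Fin.castLE hsn i) ^ m i = Yv hsn m x i + v i x :=
      eventually_all.2 fun i => hv2 i
    have hcomp : ∀ j : Fin s, ∃ u, XPE hsn m j 2 u ∧
        (fun x => f^[K1 + 2] x (Fin.castLE hsn j)) =ᶠ[nhds (0:En n)]
          fun x => lam j ^ (K1 + 2) * x (Fin.castLE hsn j)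
            + ((K1 + 2 : ℕ) : ℂ) * lam j ^ (K1 + 1) * x (Fin.castLE hsn j) *
                (∑ i, a j i * x (Fin.castLE hsn i) ^ m i)
            + u x := by
      intro j
      -- pieces
      have hok_xpe : XPE hsn m j 2 (ok j) :=
        ⟨okh j, oke j, okhP1 j, okeH j, Filter.Eventually.of_forall (fun x => okrep j x)⟩
      have p1 := XPE.smul (lam j) hok_xpe
      have hW : XPE hsn m j 1
          (fun x => f^[K1 + 1] x (Fin.castLE hsn j) - lam j ^ (K1 + 1) * x (Fin.castLE hsn j)) := by
        refine ⟨fun y => ((K1 + 1 : ℕ) : ℂ) * lam j ^ K1 * pS s a j y + okh j y, oke j,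
          hQ1 j, okeH j, ?_⟩
        filter_upwards [hgdec j] with x hx
        rw [hx]
        ring
      have hvT : EPY hsn m 2 (fun x => ∑ i, a j i * v i x) :=
        EPY.sum Finset.univ (fun i x => a j i * v i x) (fun i _ => EPY.smul (a j i) (hv1 i))
      have hT1 : EPY hsn m 1 (fun x => ∑ i, a j i * f^[K1 + 1] x (Fin.castLE hsn i) ^ m i) := by
        refine EPY.econgr ?_ (EPY.add (EPY.of_P (pS_P1 a j)) (hvT.mono one_le_two))
        filter_upwards [hall] with x hx
        calc ∑ i, a j i * f^[K1 + 1] x (Fin.castLE hsn i) ^ m i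
            = ∑ i, (a j i * Yv hsn m x i + a j i * v i x) :=
              Finset.sum_congr rfl fun i _ => by rw [hx i]; ring
          _ = _ := by rw [Finset.sum_add_distrib]; simp only [pS]
      have p2 := XPE.mul_EPY hW hT1
      have hTmP : EPY hsn m 2 (fun x =>
          (∑ i, a j i * f^[K1 + 1] x (Fin.castLE hsn i) ^ m i)
            - pS s a j (Yv hsn m x)) := by
        refine EPY.econgr ?_ hvT
        filter_upwards [hall] with x hx
        simp only [pS]
        rw [← Finset.sum_sub_distrib]
        refine Finset.sum_congr rfl fun i _ => ?_
        rw [hx i]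
        ring
      have p3 := XPE.smul (lam j ^ (K1 + 1)) (XPE.x_mul_EPY (j := j) hTmP)
      have hgxpe : XPE hsn m j 0 (fun x => f^[K1 + 1] x (Fin.castLE hsn j)) :=
        ⟨fun y => lam j ^ (K1 + 1) +
            (((K1 + 1 : ℕ) : ℂ) * lam j ^ K1 * pS s a j y + okh j y), oke j,
          (P1.const _).add ((hQ1 j).mono (Nat.zero_le _)), okeH j, hgdec j⟩
      have hoh : EPY hsn m 2
          (fun x => oh j (fun i => f^[K1 + 1] x (Fin.castLE hsn i) ^ m i)) := by
        refine EPY.subst (ohP1 j) (w := fun x i => f^[K1 + 1] x (Fin.castLE hsn i) ^ m i) ?_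
        intro i
        exact EPY.econgr (hv2 i)
          (EPY.add (EPY.of_P (P1.coord i)) ((hv1 i).mono one_le_two))
      have p4 := XPE.mul_EPY hgxpe hoh
      have p5 : XPE hsn m j 2 (fun x => oe j (f^[K1 + 1] x)) :=
        XPE.of_E (HO.comp (oeH j) hga hg0)
      have hbig := XPE.add p1 (XPE.add p2 (XPE.add p3 (XPE.add p4 p5)))
      refine ⟨_, hbig, ?_⟩
      filter_upwards [hgt.eventually (hform1 j), hF1 j] with x hx2 hx1
      have hit : f^[K1 + 2] x = f (f^[K1 + 1] x) := Function.iterate_succ_apply' f (K1 + 1) x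
      rw [hit, hx2, orep j (f^[K1 + 1] x)]
      beta_reduce
      rw [hx1]
      simp only [pS, Yv_def]
      push_cast
      ring
    choose u hu hueq using hcomp
    choose qn en hqn hen hrep using hu
    refine ⟨fun j x => x (Fin.castLE hsn j) * qn j (Yv hsn m x) + en j x,
      fun r x => mu r * Rk r x + R r (f^[K1 + 1] x), ?_, ?_, ?_, ?_⟩
    · intro j
      exact ⟨qn j, hqn j, en j, hen j, fun x => rfl⟩
    · intro r hr
      exact HO.add (HO.smul (mu r) (hRkH r hr)) (HO.comp (hR r hr) hga hg0)
    · intro j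
      filter_upwards [hueq j, hrep j] with x hx1 hx2
      rw [hx1, hx2]
      simp only [Nat.add_sub_cancel, Yv_def]
    · intro r hr
      filter_upwards [hF2 r hr, hgt.eventually (hform2 r hr)] with x hx1 hx2
      have hit : f^[K1 + 2] x = f (f^[K1 + 1] x) := Function.iterate_succ_apply' f (K1 + 1) x
      rw [hit, hx2, hx1]
      ring
end
end

section
/- Let m > 1 be a positive integer and let f : Δ^n → ℂ^n be a holomorphic mapping such that the origin is an isolated fixed point of f and such that every eigenvalue λ of the Jacobian matrix Df(0) satisfies either λ = 1 or λ^m ≠ 1. Then the origin is an isolated fixed point of the iterate f^m, and moreover there exist a ball B centered at the origin with cl(B) ⊆ Δ^n and a δ > 0 such that for every holomorphic mapping g with sup_{x ∈ cl(B)} |g(x) − f(x)| < δ for which g^m is defined on B and all fixed points of g^m in B are simple, the number of fixed points of g in B equals the number of fixed points of g^m in B. -/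
open Metric Filter Function

set_option maxHeartbeats 1000000

noncomputable section

lemma auxL0 {n m : ℕ} (hm : 1 < m) (T : Module.End ℂ (En n))
    (hT : ∀ μ : ℂ, T.HasEigenvalue μ → μ = 1 ∨ μ ^ m ≠ 1)
    {v : En n} (hv : (T ^ m) v = v) : T v = v := by
  have hm0 : m ≠ 0 := by omega
  set Q : Module.End ℂ (En n) := ∑ k ∈ Finset.range m, T ^ k with hQdef
  have hQ1 : Q * (T - 1) = T ^ m - 1 := geom_sum_mul T m
  have hker : LinearMap.ker Q = ⊥ := by
    by_contra h
    obtain ⟨w, hwQ, hw0⟩ := (Submodule.ne_bot_iff _).mp h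
    have hcomm : Q * T = T * Q := by
      simp only [hQdef, Finset.sum_mul, Finset.mul_sum]
      refine Finset.sum_congr rfl fun k _ => ?_
      rw [← pow_succ, ← pow_succ']
    have hinv : ∀ x ∈ LinearMap.ker Q, T x ∈ LinearMap.ker Q := by
      intro x hx
      rw [LinearMap.mem_ker] at hx ⊢
      have : (Q * T) x = (T * Q) x := by rw [hcomm]
      simpa [Module.End.mul_apply, hx] using this
    set p := LinearMap.ker Q with hp
    let B : Module.End ℂ p := T.restrict hinv
    haveI : Nontrivial p := ⟨⟨⟨w, hwQ⟩, 0, by simp [Subtype.ext_iff, hw0]⟩⟩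
    obtain ⟨μ, hμ⟩ := Module.End.exists_eigenvalue B
    obtain ⟨x, hx⟩ := hμ.exists_hasEigenvector
    have hBx : (B x : En n) = μ • (x : En n) := by
      rw [hx.apply_eq_smul]; rfl
    have hTx : T (x : En n) = μ • (x : En n) := by
      rw [← hBx]; rfl
    have hx0 : (x : En n) ≠ 0 := fun hc => hx.2 (Submodule.coe_eq_zero.mp hc)
    have hEig : Module.End.HasEigenvalue T μ :=
      Module.End.hasEigenvalue_of_hasEigenvector
        ⟨Module.End.mem_eigenspace_iff.mpr hTx, hx0⟩
    have hpow : ∀ k : ℕ, (T ^ k) (x : En n) = μ ^ k • (x : En n) := by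
      intro k
      induction k with
      | zero => simp
      | succ k ih => rw [pow_succ', pow_succ', Module.End.mul_apply, ih, LinearMap.map_smul,
          hTx, smul_smul, mul_comm]
    have hQx : Q (x : En n) = (∑ k ∈ Finset.range m, μ ^ k) • (x : En n) := by
      rw [hQdef, LinearMap.sum_apply]
      rw [Finset.sum_smul]
      exact Finset.sum_congr rfl fun k _ => hpow k
    have hQx0 : Q (x : En n) = 0 := x.2
    rw [hQx0] at hQx
    have hSum : (∑ k ∈ Finset.range m, μ ^ k) = 0 :=
      by rcases smul_eq_zero.mp hQx.symm with h | h
         · exact h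
         · exact absurd h hx0
    have hμ1 : μ ≠ 1 := by
      intro h
      rw [h] at hSum
      simp at hSum
      exact hm0 hSum
    have hμm : μ ^ m = 1 := by
      have := geom_sum_mul μ m
      rw [hSum, zero_mul] at this
      exact (sub_eq_zero.mp this.symm)
    rcases hT μ hEig with h | h
    · exact hμ1 h
    · exact h hμm
  have hmem : (T - 1) v ∈ LinearMap.ker Q := by
    rw [LinearMap.mem_ker]
    have : Q ((T - 1) v) = (Q * (T - 1)) v := rfl
    rw [this, hQ1]
    simp [LinearMap.sub_apply, hv]
  rw [hker, Submodule.mem_bot] at hmem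
  have h2 : T v - v = 0 := by simpa [LinearMap.sub_apply] using hmem
  exact sub_eq_zero.mp h2

lemma auxDerivBound {n : ℕ} (u : En n → En n) (x : En n) (t M : ℝ) (ht : 0 < t) (hM : 0 ≤ M)
    (hd : ∀ y ∈ ball x t, DifferentiableAt ℂ u y)
    (hb : ∀ y ∈ ball x t, ‖u y‖ ≤ M) :
    ‖fderiv ℂ u x‖ ≤ 2 * M / t := by
  have hx : x ∈ ball x t := mem_ball_self ht
  apply ContinuousLinearMap.opNorm_le_bound _ (by positivity)
  intro v
  rcases eq_or_ne v 0 with rfl | hv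
  · simp
  have hvn : 0 < ‖v‖ := norm_pos_iff.mpr hv
  have hq : 0 < t / ‖v‖ := by positivity
  set ψ : ℂ → En n := fun lam => u (x + lam • v) with hψ
  have hline : ∀ lam : ℂ, HasDerivAt (fun l : ℂ => x + l • v) v lam := by
    intro lam
    simpa using ((hasDerivAt_id lam).smul_const v).const_add x
  have hmem : ∀ lam : ℂ, lam ∈ ball (0:ℂ) (t/‖v‖) → x + lam • v ∈ ball x t := by
    intro lam hl
    rw [mem_ball, dist_eq_norm] at hl ⊢
    rw [add_sub_cancel_left, norm_smul]
    rw [sub_zero] at hl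
    calc ‖lam‖ * ‖v‖ < (t/‖v‖) * ‖v‖ := by
          exact mul_lt_mul_of_pos_right hl hvn
      _ = t := by field_simp
  have hψd : DifferentiableOn ℂ ψ (ball (0:ℂ) (t/‖v‖)) := by
    intro lam hl
    apply DifferentiableAt.differentiableWithinAt
    exact (hd _ (hmem lam hl)).comp lam (hline lam).differentiableAt
  have hDψ : HasDerivAt ψ ((fderiv ℂ u x) v) 0 := by
    have h1 : HasFDerivAt u (fderiv ℂ u x) x := (hd x hx).hasFDerivAt
    have h2 : HasFDerivAt u (fderiv ℂ u x) (x + (0:ℂ) • v) := by simpa using h1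
    exact h2.comp_hasDerivAt (0:ℂ) (hline 0)
  have key : ∀ R₂ : ℝ, 2*M < R₂ → ‖(fderiv ℂ u x) v‖ ≤ R₂ / (t/‖v‖) := by
    intro R₂ hR₂
    have hmaps : Set.MapsTo ψ (ball (0:ℂ) (t/‖v‖)) (ball (ψ 0) R₂) := by
      intro lam hl
      rw [mem_ball, dist_eq_norm]
      calc ‖ψ lam - ψ 0‖ ≤ ‖ψ lam‖ + ‖ψ 0‖ := norm_sub_le _ _
        _ ≤ M + M := by
            refine add_le_add (hb _ (hmem lam hl)) (hb _ (hmem 0 ?_))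
            exact mem_ball_self hq
        _ < R₂ := by linarith
    have h3 := Complex.norm_deriv_le_div_of_mapsTo_ball hψd (hmaps.mono_right ball_subset_closedBall) hq
    rwa [hDψ.deriv] at h3
  have h4 : ∀ η : ℝ, 0 < η → ‖(fderiv ℂ u x) v‖ ≤ 2*M/t*‖v‖ + η := by
    intro η hη
    have h5 := key (2*M + η*t/‖v‖) (by
      have : 0 < η*t/‖v‖ := by positivity
      linarith)
    calc ‖(fderiv ℂ u x) v‖ ≤ (2*M + η*t/‖v‖) / (t/‖v‖) := h5
      _ = 2*M/t*‖v‖ + η := by field_simp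
  have h6 : ‖(fderiv ℂ u x) v‖ ≤ 2*M/t*‖v‖ := le_of_forall_pos_le_add h4
  exact h6

lemma auxKey {n m : ℕ} (hm : 1 < m) (T : En n →ₗ[ℂ] En n)
    (hT : ∀ μ : ℂ, Module.End.HasEigenvalue T μ → μ = 1 ∨ μ ^ m ≠ 1) :
    ∃ ε₀ : ℝ, 0 < ε₀ ∧ ε₀ ≤ 1/2 ∧
      ∀ (G : En n → En n) (S : Set (En n)),
        (∀ a ∈ S, ∀ b ∈ S, ‖(G a - T a) - (G b - T b)‖ ≤ ε₀ * ‖a - b‖) →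
        ∀ q : En n, (∀ k, k ≤ m → G^[k] q ∈ S) → G^[m] q = q → G q = q := by
  haveI : NeZero m := ⟨by omega⟩
  have hm0 : 0 < m := by omega
  -- the comparison linear map
  set Λ₁ : (Fin m → En n) →ₗ[ℂ] (Fin m → En n) :=
    LinearMap.pi (fun k => (LinearMap.proj (k+1) : (Fin m → En n) →ₗ[ℂ] En n)
      - T ∘ₗ (LinearMap.proj k)) with hΛ₁
  set Λ₂ : (Fin m → En n) →ₗ[ℂ] En n := ∑ k : Fin m, LinearMap.proj k with hΛ₂
  set Λ : (Fin m → En n) →ₗ[ℂ] (Fin m → En n) × En n := Λ₁.prod Λ₂ with hΛ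
  have hΛ₁app : ∀ (z : Fin m → En n) (k : Fin m), Λ₁ z k = z (k+1) - T (z k) := by
    intro z k
    simp [hΛ₁, LinearMap.pi_apply]
  have hΛ₂app : ∀ (z : Fin m → En n), Λ₂ z = ∑ k : Fin m, z k := by
    intro z
    simp [hΛ₂, LinearMap.sum_apply, LinearMap.coe_sum, Finset.sum_apply, LinearMap.proj_apply]
  -- kernel is trivial
  have hker : LinearMap.ker Λ = ⊥ := by
    rw [LinearMap.ker_eq_bot']
    intro z hz
    have hz1 : ∀ k : Fin m, z (k+1) = T (z k) := by
      intro k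
      have h1 : Λ₁ z = 0 := by
        have := congrArg Prod.fst hz
        simpa [hΛ, LinearMap.prod_apply] using this
      have := congrFun h1 k
      rw [hΛ₁app] at this
      simpa [sub_eq_zero] using this
    have hz2 : ∑ k : Fin m, z k = 0 := by
      have := congrArg Prod.snd hz
      simpa [hΛ, LinearMap.prod_apply, hΛ₂app] using this
    have hfin : ∀ (j : ℕ) (hj : j + 1 < m), (⟨j, by omega⟩ : Fin m) + 1 = ⟨j+1, hj⟩ := by
      intro j hj
      apply Fin.ext
      rw [Fin.val_add]
      have h1 : ((1 : Fin m) : ℕ) = 1 % m := Fin.val_one' m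
      rw [h1, Nat.mod_eq_of_lt hm, Nat.mod_eq_of_lt hj]
    have hz0 : ∀ (j : ℕ) (hj : j < m), z ⟨j, hj⟩ = (T ^ j) (z ⟨0, hm0⟩) := by
      intro j
      induction j with
      | zero => intro hj; simp
      | succ j ih =>
        intro hj
        have hj' : j < m := by omega
        have : (⟨j, hj'⟩ : Fin m) + 1 = ⟨j+1, hj⟩ := hfin j hj
        rw [← this, hz1, ih hj', ← Module.End.mul_apply, ← pow_succ']
    have hwrap : (⟨m-1, by omega⟩ : Fin m) + 1 = ⟨0, hm0⟩ := by
      apply Fin.ext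
      rw [Fin.val_add]
      have h1 : ((1 : Fin m) : ℕ) = 1 % m := Fin.val_one' m
      rw [h1, Nat.mod_eq_of_lt hm]
      show (m - 1 + 1) % m = 0
      have h2 : m - 1 + 1 = m := by omega
      rw [h2, Nat.mod_self]
    have hTm : (T ^ m) (z ⟨0, hm0⟩) = z ⟨0, hm0⟩ := by
      have h1 : (T ^ m) (z ⟨0, hm0⟩) = T ((T ^ (m-1)) (z ⟨0, hm0⟩)) := by
        rw [← Module.End.mul_apply, ← pow_succ']
        congr 2
        omega
      rw [h1, ← hz0 (m-1) (by omega), ← hz1, hwrap]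
    have hfix0 : T (z ⟨0, hm0⟩) = z ⟨0, hm0⟩ := auxL0 hm T hT hTm
    have hpowfix : ∀ j : ℕ, (T ^ j) (z ⟨0, hm0⟩) = z ⟨0, hm0⟩ := by
      intro j
      induction j with
      | zero => simp
      | succ j ih => rw [pow_succ', Module.End.mul_apply, ih, hfix0]
    have hconst : ∀ k : Fin m, z k = z ⟨0, hm0⟩ := by
      intro k
      have : z k = z ⟨k.val, k.isLt⟩ := by congr
      rw [this, hz0 k.val k.isLt, hpowfix]
    have hz00 : z ⟨0, hm0⟩ = 0 := by
      have hsum : ∑ k : Fin m, z k = m • z ⟨0, hm0⟩ := by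
        rw [Finset.sum_congr rfl (fun k _ => hconst k)]
        rw [Finset.sum_const, Finset.card_univ, Fintype.card_fin]
      rw [hz2] at hsum
      have h2 : (m : ℂ) • z ⟨0, hm0⟩ = 0 := by
        rw [Nat.cast_smul_eq_nsmul, ← hsum]
      rcases smul_eq_zero.mp h2 with h | h
      · exact absurd (Nat.cast_eq_zero.mp h) (by omega)
      · exact h
    funext k
    rw [hconst k, hz00]
    rfl
  obtain ⟨K, hK0, hK⟩ := Λ.exists_antilipschitzWith hker
  have hKpos : (0:ℝ) < (K:ℝ) := hK0
  set ε₀ : ℝ := min (1/2) (1/(2*(K:ℝ))) with hε₀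
  have hε₀pos : 0 < ε₀ := by
    apply lt_min
    · norm_num
    · positivity
  refine ⟨ε₀, hε₀pos, min_le_left _ _, ?_⟩
  intro G S hLip q horb hfix
  set X : ℕ → En n := fun j => G^[j] q with hX
  have hXsucc : ∀ j, X (j+1) = G (X j) := fun j => Function.iterate_succ_apply' G j q
  have hXm : X m = X 0 := by
    show G^[m] q = G^[0] q
    simp [hfix]
  have hXm1 : X (m+1) = X 1 := by
    rw [hXsucc m, hXm, ← hXsucc 0]
  set z : ℕ → En n := fun j => X (j+1) - X j with hz
  have hzm : z m = z 0 := by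
    show X (m+1) - X m = X (0+1) - X 0
    rw [hXm, hXm1]
  set Z : Fin m → En n := fun k => z k.val with hZdef
  have hZadd : ∀ k : Fin m, Z (k+1) = z (k.val + 1) := by
    intro k
    have h1 : ((1 : Fin m) : ℕ) = 1 := by
      rw [Fin.val_one' m, Nat.mod_eq_of_lt hm]
    rcases Nat.lt_or_ge (k.val + 1) m with h | h
    · have hval : ((k+1 : Fin m) : ℕ) = k.val + 1 := by
        rw [Fin.val_add, h1, Nat.mod_eq_of_lt h]
      show z ((k+1 : Fin m) : ℕ) = z (k.val + 1)
      rw [hval]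
    · have hkm : k.val + 1 = m := by
        have := k.isLt
        omega
      have hval : ((k+1 : Fin m) : ℕ) = 0 := by
        rw [Fin.val_add, h1, hkm, Nat.mod_self]
      show z ((k+1 : Fin m) : ℕ) = z (k.val + 1)
      rw [hval, hkm, hzm]
  have hbound : ∀ k : Fin m, ‖Λ₁ Z k‖ ≤ ε₀ * ‖Z k‖ := by
    intro k
    have hk1 : k.val + 1 ≤ m := k.isLt
    have hXv1 : X (k.val + 1) = G (X k.val) := hXsucc _
    have hXv2 : X (k.val + 1 + 1) = G (X (k.val+1)) := hXsucc _
    have e1 : Λ₁ Z k = (G (X (k.val+1)) - T (X (k.val+1))) - (G (X k.val) - T (X k.val)) := by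
      rw [hΛ₁app, hZadd]
      show (X (k.val+1+1) - X (k.val+1)) - T (X (k.val+1) - X k.val) = _
      rw [map_sub, hXv2]
      nth_rewrite 2 [hXv1]
      abel
    rw [e1]
    have h2 := hLip (X (k.val+1)) (horb _ hk1) (X k.val) (horb _ (le_of_lt k.isLt))
    have h3 : Z k = X (k.val+1) - X k.val := rfl
    rw [h3]
    exact h2
  have hsumZ : Λ₂ Z = 0 := by
    rw [hΛ₂app]
    have e1 : ∑ k : Fin m, Z k = ∑ j ∈ Finset.range m, z j :=
      Fin.sum_univ_eq_sum_range (fun j => z j) m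
    have e2 : ∑ j ∈ Finset.range m, z j = X m - X 0 :=
      Finset.sum_range_sub (fun j => X j) m
    rw [e1, e2, hXm, sub_self]
  have hZnorm : ‖Z‖ ≤ (K:ℝ) * ‖Λ Z‖ := by
    have h1 := hK.le_mul_dist Z 0
    simpa [dist_zero_right, map_zero] using h1
  have hΛZ : ‖Λ Z‖ ≤ ε₀ * ‖Z‖ := by
    have hΛeq : Λ Z = (Λ₁ Z, Λ₂ Z) := rfl
    rw [hΛeq, Prod.norm_def, hsumZ, norm_zero, max_eq_left (norm_nonneg _)]
    apply (pi_norm_le_iff_of_nonneg (by positivity)).mpr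
    intro k
    calc ‖Λ₁ Z k‖ ≤ ε₀ * ‖Z k‖ := hbound k
      _ ≤ ε₀ * ‖Z‖ := by
          apply mul_le_mul_of_nonneg_left (norm_le_pi_norm Z k) (le_of_lt hε₀pos)
  have hKe : (K:ℝ) * ε₀ ≤ 1/2 := by
    calc (K:ℝ) * ε₀ ≤ (K:ℝ) * (1/(2*(K:ℝ))) := by
          apply mul_le_mul_of_nonneg_left (min_le_right _ _) (le_of_lt hKpos)
      _ = 1/2 := by field_simp
  have hfinal : ‖Z‖ ≤ (1/2) * ‖Z‖ := by
    calc ‖Z‖ ≤ (K:ℝ) * ‖Λ Z‖ := hZnorm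
      _ ≤ (K:ℝ) * (ε₀ * ‖Z‖) := by
          apply mul_le_mul_of_nonneg_left hΛZ (le_of_lt hKpos)
      _ = ((K:ℝ) * ε₀) * ‖Z‖ := by ring
      _ ≤ (1/2) * ‖Z‖ := by
          apply mul_le_mul_of_nonneg_right hKe (norm_nonneg _)
  have hZ0 : Z = 0 := by
    have h4 : ‖Z‖ ≤ 0 := by linarith
    exact norm_le_zero_iff.mp h4
  have hz0' : z 0 = 0 := by
    have := congrFun hZ0 ⟨0, hm0⟩
    exact this
  have : X 1 - X 0 = 0 := hz0'
  have h2 : X 1 = X 0 := by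
    rwa [sub_eq_zero] at this
  show G q = q
  calc G q = X 1 := (Function.iterate_one G ▸ rfl : G q = G^[1] q)
    _ = X 0 := h2
    _ = q := rfl


theorem statement19 (n m : ℕ) (hm : 1 < m)
    (f : En n → En n)
    (hf : DifferentiableOn ℂ f (ball (0 : En n) 1))
    (h0 : IsolatedFixedPt f 0)
    (heig : ∀ lam : ℂ,
      Module.End.HasEigenvalue
        ((fderiv ℂ f 0 : En n →L[ℂ] En n) : En n →ₗ[ℂ] En n) lam →
      lam = 1 ∨ lam ^ m ≠ 1) :
    IsolatedFixedPt (f^[m]) 0 ∧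
    ∃ r : ℝ, 0 < r ∧ closure (ball (0 : En n) r) ⊆ ball (0 : En n) 1 ∧
      ∃ δ : ℝ, 0 < δ ∧
        ∀ g : En n → En n,
          DifferentiableOn ℂ g (closure (ball (0 : En n) r)) →
          (∀ x ∈ closure (ball (0 : En n) r), dist (g x) (f x) < δ) →
          -- `g^m` is defined on `B`
          (∀ x ∈ ball (0 : En n) r, ∀ k : ℕ, k ≤ m → g^[k] x ∈ closure (ball (0 : En n) r)) →
          -- all fixed points of `g^m` in `B` are simple
          (∀ q ∈ ball (0 : En n) r, g^[m] q = q →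
            ¬ Module.End.HasEigenvalue
                ((fderiv ℂ (g^[m]) q : En n →L[ℂ] En n) : En n →ₗ[ℂ] En n) 1) →
          {x ∈ ball (0 : En n) r | g x = x}.ncard
            = {x ∈ ball (0 : En n) r | g^[m] x = x}.ncard := by
  have hf0 : f 0 = 0 := h0.1
  rcases subsingleton_or_nontrivial (En n) with hsub | hnt
  · constructor
    · exact ⟨Function.iterate_fixed hf0 m, Set.univ, isOpen_univ, trivial,
        fun x _ _ => Subsingleton.elim x 0⟩
    · refine ⟨1/2, by norm_num, ?_, 1, one_pos, ?_⟩
      · intro x _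
        rw [mem_ball]
        rw [Subsingleton.elim x 0]
        simpa using one_pos
      · intro g _ _ _ _
        congr 1
        ext x
        simp only [Set.mem_setOf_eq]
        constructor
        · rintro ⟨hx1, _⟩; exact ⟨hx1, Subsingleton.elim _ _⟩
        · rintro ⟨hx1, _⟩; exact ⟨hx1, Subsingleton.elim _ _⟩
  -- main case
  have hball1 : (0:En n) ∈ ball (0:En n) 1 := mem_ball_self one_pos
  have hdA : DifferentiableAt ℂ f 0 := hf.differentiableAt (isOpen_ball.mem_nhds hball1)
  set A : En n →L[ℂ] En n := fderiv ℂ f 0 with hA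
  set T : En n →ₗ[ℂ] En n := (A : En n →ₗ[ℂ] En n) with hTdef
  obtain ⟨ε₀, hε₀pos, hε₀half, hKey⟩ := auxKey hm T heig
  set L : ℝ := ‖A‖ + 1 with hL
  have hL1 : 1 ≤ L := by
    have := norm_nonneg A
    simp only [hL]
    linarith
  have hLpos : 0 < L := by linarith
  have hLm1 : 1 ≤ L ^ m := one_le_pow₀ hL1
  have hLmpos : 0 < L ^ m := by positivity
  -- uniform littleO bound
  obtain ⟨s₀, hs₀pos, hs₀le, hsmall⟩ :
      ∃ s₀ : ℝ, 0 < s₀ ∧ s₀ ≤ 1 ∧ ∀ y : En n, ‖y‖ < s₀ → ‖f y - A y‖ ≤ ε₀/16 * ‖y‖ := by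
    have h1 : HasFDerivAt f A 0 := hdA.hasFDerivAt
    rw [hasFDerivAt_iff_isLittleO_nhds_zero] at h1
    have h2 := h1.def (show (0:ℝ) < ε₀/16 by positivity)
    rw [Metric.eventually_nhds_iff] at h2
    obtain ⟨s₁, hs₁, h3⟩ := h2
    refine ⟨min s₁ 1, by positivity, min_le_right _ _, ?_⟩
    intro y hy
    have h4 := h3 (show dist y 0 < s₁ by
      rw [dist_zero_right]; exact lt_of_lt_of_le hy (min_le_left _ _))
    simpa [hf0] using h4
  -- Lipschitz bound for u = f - A on ball 0 (s₀/2)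
  set u : En n → En n := fun y => f y - A y with hu
  have hudiff : ∀ y ∈ ball (0:En n) 1, DifferentiableAt ℂ u y := by
    intro y hy
    exact (hf.differentiableAt (isOpen_ball.mem_nhds hy)).sub (A.differentiable.differentiableAt)
  have htri : ∀ x y : En n, ‖y‖ ≤ ‖y - x‖ + ‖x‖ := by
    intro x y
    calc ‖y‖ = ‖(y - x) + x‖ := by rw [sub_add_cancel]
      _ ≤ ‖y - x‖ + ‖x‖ := norm_add_le _ _
  have huderiv : ∀ x ∈ ball (0:En n) (s₀/2), ‖fderiv ℂ u x‖ ≤ ε₀/2 := by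
    intro x hx
    rw [mem_ball_zero_iff] at hx
    have hres := auxDerivBound u x (s₀/4) (ε₀/16 * s₀) (by positivity) (by positivity)
      (fun y hy => by
        rw [mem_ball_iff_norm] at hy
        apply hudiff
        rw [mem_ball_zero_iff]
        have h5 := htri x y
        linarith)
      (fun y hy => by
        rw [mem_ball_iff_norm] at hy
        have h5 := htri x y
        have h6 : ‖y‖ < s₀ := by linarith
        calc ‖u y‖ ≤ ε₀/16 * ‖y‖ := hsmall y h6
          _ ≤ ε₀/16 * s₀ := by nlinarith)
    calc ‖fderiv ℂ u x‖ ≤ 2 * (ε₀/16 * s₀) / (s₀/4) := hres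
      _ = ε₀/2 := by field_simp; ring
  have huLip : ∀ a ∈ ball (0:En n) (s₀/2), ∀ b ∈ ball (0:En n) (s₀/2),
      ‖u a - u b‖ ≤ ε₀/2 * ‖a - b‖ := by
    intro a ha b hb
    exact Convex.norm_image_sub_le_of_norm_fderiv_le
      (fun x hx => hudiff x (by
        rw [mem_ball_zero_iff] at hx ⊢
        linarith))
      (fun x hx => huderiv x hx) (convex_ball _ _) hb ha
  -- f is Lipschitz with constant L on ball 0 (s₀/2)
  have hfLip : ∀ a ∈ ball (0:En n) (s₀/2), ∀ b ∈ ball (0:En n) (s₀/2),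
      ‖f a - f b‖ ≤ L * ‖a - b‖ := by
    intro a ha b hb
    have h1 : f a - f b = (u a - u b) + (A a - A b) := by
      simp only [hu]
      abel
    rw [h1]
    calc ‖(u a - u b) + (A a - A b)‖ ≤ ‖u a - u b‖ + ‖A a - A b‖ := norm_add_le _ _
      _ ≤ ε₀/2 * ‖a - b‖ + ‖A‖ * ‖a - b‖ := by
          refine add_le_add (huLip a ha b hb) ?_
          rw [← map_sub]
          exact A.le_opNorm _
      _ ≤ L * ‖a - b‖ := by
          have h2 : ε₀/2 ≤ 1 := by linarith
          simp only [hL]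
          nlinarith [norm_nonneg (a - b)]
  -- radius ρ₁
  set ρ₁ : ℝ := s₀ / (4 * L ^ m) with hρ₁
  have hρ₁pos : 0 < ρ₁ := by positivity
  have hρ₁s : 2 * ρ₁ * L ^ m = s₀ / 2 := by
    simp only [hρ₁]
    field_simp
    ring
  have hρ₁le : ρ₁ ≤ s₀ / 4 := by
    simp only [hρ₁]
    rw [div_le_div_iff₀ (by positivity) (by norm_num)]
    nlinarith [hs₀pos, hLm1]
  -- orbits of f starting in ball 0 (2 ρ₁) stay in ball 0 (s₀/2)
  have hforb : ∀ y : En n, ‖y‖ < 2 * ρ₁ → ∀ k, k ≤ m → ‖f^[k] y‖ ≤ L ^ k * ‖y‖ := by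
    intro y hy
    intro k
    induction k with
    | zero => intro _; simp
    | succ k ih =>
      intro hk1
      have hk : k ≤ m := by omega
      have h2 := ih hk
      have hin : f^[k] y ∈ ball (0:En n) (s₀/2) := by
        rw [mem_ball_zero_iff]
        have h3 : L ^ k * ‖y‖ < L ^ m * (2 * ρ₁) := by
          have h4 : L ^ k ≤ L ^ m := pow_le_pow_right₀ hL1 hk
          nlinarith [norm_nonneg y, pow_pos hLpos k]
        calc ‖f^[k] y‖ ≤ L ^ k * ‖y‖ := h2
          _ < L ^ m * (2 * ρ₁) := h3
          _ = s₀ / 2 := by rw [← hρ₁s]; ring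
      have h0in : (0:En n) ∈ ball (0:En n) (s₀/2) := mem_ball_self (by positivity)
      have h5 : ‖f (f^[k] y) - f 0‖ ≤ L * ‖f^[k] y - 0‖ := hfLip _ hin _ h0in
      rw [hf0, sub_zero, sub_zero] at h5
      rw [Function.iterate_succ_apply']
      calc ‖f (f^[k] y)‖ ≤ L * ‖f^[k] y‖ := h5
        _ ≤ L * (L ^ k * ‖y‖) := by nlinarith
        _ = L ^ (k+1) * ‖y‖ := by rw [pow_succ]; ring
  have horbmem : ∀ y : En n, ‖y‖ < 2 * ρ₁ → ∀ k, k ≤ m → f^[k] y ∈ ball (0:En n) (s₀/2) := by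
    intro y hy k hk
    rw [mem_ball_zero_iff]
    have h2 := hforb y hy k hk
    have h4 : L ^ k ≤ L ^ m := pow_le_pow_right₀ hL1 hk
    have h3 : L ^ k * ‖y‖ < L ^ m * (2 * ρ₁) := by
      nlinarith [norm_nonneg y, pow_pos hLpos k]
    calc ‖f^[k] y‖ ≤ L ^ k * ‖y‖ := h2
      _ < L ^ m * (2 * ρ₁) := h3
      _ = s₀ / 2 := by rw [← hρ₁s]; ring
  -- the key rigidity fact for f
  have hfixf : ∀ x : En n, ‖x‖ < 2 * ρ₁ → f^[m] x = x → f x = x := by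
    intro x hx hfx
    apply hKey f (ball (0:En n) (s₀/2))
    · intro a ha b hb
      have h1 := huLip a ha b hb
      have h2 : ε₀/2 * ‖a - b‖ ≤ ε₀ * ‖a - b‖ := by
        nlinarith [norm_nonneg (a - b)]
      calc ‖(f a - T a) - (f b - T b)‖ = ‖u a - u b‖ := by rfl
        _ ≤ ε₀/2 * ‖a - b‖ := h1
        _ ≤ ε₀ * ‖a - b‖ := h2
    · exact fun k hk => horbmem x hx k hk
    · exact hfx
  -- neighborhood from isolatedness of 0 for f
  obtain ⟨U, hUopen, hU0, hUuniq⟩ := h0.2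
  obtain ⟨ρU, hρUpos, hρUsub⟩ := Metric.isOpen_iff.mp hUopen 0 hU0
  set ρ : ℝ := min ρ₁ ρU with hρ
  have hρpos : 0 < ρ := lt_min hρ₁pos hρUpos
  have hρfix : ∀ x : En n, ‖x‖ < ρ → f^[m] x = x → x = 0 := by
    intro x hx hfx
    have h1 : f x = x := hfixf x (by
      have : ρ ≤ ρ₁ := min_le_left _ _
      linarith) hfx
    apply hUuniq x _ h1
    apply hρUsub
    rw [mem_ball_zero_iff]
    have : ρ ≤ ρU := min_le_right _ _
    linarith
  have partA : IsolatedFixedPt (f^[m]) 0 := by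
    refine ⟨Function.iterate_fixed hf0 m, ball (0:En n) ρ, isOpen_ball, mem_ball_self hρpos, ?_⟩
    intro x hx hfx
    exact hρfix x (mem_ball_zero_iff.mp hx) hfx
  refine ⟨partA, ?_⟩
  -- Part B
  set r : ℝ := ρ / 2 with hr
  have hrpos : 0 < r := by positivity
  have hrρ₁ : r ≤ ρ₁ / 2 := by
    simp only [hr]
    have : ρ ≤ ρ₁ := min_le_left _ _
    linarith
  have hrs₀ : r < s₀ / 2 := by
    have h1 : ρ₁ ≤ s₀ / 4 := hρ₁le
    linarith
  have hclos : closure (ball (0:En n) r) = closedBall (0:En n) r :=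
    closure_ball 0 (ne_of_gt hrpos)
  have hr1 : r < 1 := by
    have : s₀ / 2 ≤ 1 := by linarith
    linarith
  -- differentiability of iterates of f near 0
  have hdiffIter : ∀ k, k ≤ m → ∀ x : En n, ‖x‖ < 2*ρ₁ → DifferentiableAt ℂ (f^[k]) x := by
    intro k
    induction k with
    | zero => intro _ x _; simpa using differentiableAt_id
    | succ k ih =>
      intro hk1 x hx
      have hk : k ≤ m := by omega
      rw [Function.iterate_succ']
      apply DifferentiableAt.comp
      · apply hf.differentiableAt
        apply isOpen_ball.mem_nhds
        have h2 := horbmem x hx k hk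
        rw [mem_ball_zero_iff] at h2 ⊢
        linarith
      · exact ih hk x hx
  -- the annulus minimum
  set Ann : Set (En n) := closedBall (0:En n) r \ ball (0:En n) (r/2) with hAnn
  have hAnnsub : Ann ⊆ ball (0:En n) (2*ρ₁) := by
    intro y hy
    have h1 : ‖y‖ ≤ r := mem_closedBall_zero_iff.mp hy.1
    rw [mem_ball_zero_iff]
    linarith
  have hAnncomp : IsCompact Ann := (isCompact_closedBall _ _).diff isOpen_ball
  have hAnnne : Ann.Nonempty := by
    obtain ⟨y₀, hy₀⟩ := exists_norm_eq (En n) (show (0:ℝ) ≤ 3*r/4 by positivity)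
    refine ⟨y₀, ?_, ?_⟩
    · rw [mem_closedBall_zero_iff, hy₀]
      linarith
    · rw [mem_ball_zero_iff, hy₀]
      intro hcon
      linarith
  have hcont : ContinuousOn (fun y => ‖f^[m] y - y‖) Ann := by
    apply ContinuousOn.norm
    apply ContinuousOn.sub _ continuousOn_id
    intro y hy
    exact ((hdiffIter m le_rfl y (mem_ball_zero_iff.mp (hAnnsub hy))).continuousAt).continuousWithinAt
  obtain ⟨ystar, hystar, hymin⟩ := hAnncomp.exists_isMinOn hAnnne hcont
  set c : ℝ := ‖f^[m] ystar - ystar‖ with hc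
  have hcpos : 0 < c := by
    have h0c : (0:ℝ) ≤ c := norm_nonneg _
    rcases h0c.lt_or_eq with h | h
    · exact h
    · exfalso
      have h2 : ‖f^[m] ystar - ystar‖ = 0 := h.symm
      have h1 : f^[m] ystar = ystar := sub_eq_zero.mp (norm_eq_zero.mp h2)
      have hyr : ‖ystar‖ ≤ r := mem_closedBall_zero_iff.mp hystar.1
      have h3 : ystar = 0 := hρfix ystar (by
        have : r < ρ := by
          simp only [hr]
          linarith
        linarith) h1
      have h4 : ystar ∉ ball (0:En n) (r/2) := hystar.2
      rw [h3] at h4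
      exact h4 (mem_ball_self (by positivity))
  set CL : ℝ := ∑ i ∈ Finset.range m, L ^ i with hCL
  have hCLpos : 0 < CL := by
    simp only [hCL]
    apply Finset.sum_pos (fun i _ => pow_pos hLpos i)
    exact Finset.nonempty_range_iff.mpr (by omega)
  set δ : ℝ := min (c / (2 * CL)) (ε₀ * r / 32) with hδ
  have hδpos : 0 < δ :=
    lt_min (div_pos hcpos (mul_pos two_pos hCLpos))
      (div_pos (mul_pos hε₀pos hrpos) (by norm_num))
  refine ⟨r, hrpos, ?_, δ, hδpos, ?_⟩
  · rw [hclos]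
    intro y hy
    rw [mem_closedBall_zero_iff] at hy
    rw [mem_ball_zero_iff]
    linarith
  intro g hg hdist horbg hsimple
  rw [hclos] at hg hdist horbg
  set w : En n → En n := fun y => g y - f y with hw
  have hwdiff : ∀ y : En n, ‖y‖ < r → DifferentiableAt ℂ w y := by
    intro y hy
    have h1 : DifferentiableAt ℂ g y := by
      apply (hg y (ball_subset_closedBall (mem_ball_zero_iff.mpr hy))).differentiableAt
      exact mem_nhds_iff.mpr ⟨ball (0:En n) r, ball_subset_closedBall, isOpen_ball,
        mem_ball_zero_iff.mpr hy⟩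
    have h2 : DifferentiableAt ℂ f y :=
      hf.differentiableAt (isOpen_ball.mem_nhds (mem_ball_zero_iff.mpr (lt_trans hy hr1)))
    exact h1.sub h2
  have hwsup : ∀ y : En n, ‖y‖ ≤ r → ‖w y‖ ≤ δ := by
    intro y hy
    have h1 := hdist y (mem_closedBall_zero_iff.mpr hy)
    rw [dist_eq_norm] at h1
    exact le_of_lt h1
  have hwLip : ∀ a ∈ closedBall (0:En n) (r/2), ∀ b ∈ closedBall (0:En n) (r/2),
      ‖w a - w b‖ ≤ ε₀/2 * ‖a - b‖ := by
    have hderiv : ∀ x ∈ ball (0:En n) (3*r/4), ‖fderiv ℂ w x‖ ≤ 16 * δ / r := by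
      intro x hx
      rw [mem_ball_zero_iff] at hx
      have hres := auxDerivBound w x (r/8) δ (by positivity) (le_of_lt hδpos)
        (fun y hy => by
          rw [mem_ball_iff_norm] at hy
          apply hwdiff
          have h5 := htri x y
          linarith)
        (fun y hy => by
          rw [mem_ball_iff_norm] at hy
          have h5 := htri x y
          exact hwsup y (by linarith))
      calc ‖fderiv ℂ w x‖ ≤ 2 * δ / (r/8) := hres
        _ = 16 * δ / r := by
            field_simp
            ring
    intro a ha b hb
    rw [mem_closedBall_zero_iff] at ha hb
    have hmem : ∀ y : En n, ‖y‖ ≤ r/2 → y ∈ ball (0:En n) (3*r/4) := by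
      intro y hy
      rw [mem_ball_zero_iff]
      linarith
    have h6 := Convex.norm_image_sub_le_of_norm_fderiv_le
      (fun x hx => hwdiff x (by rw [mem_ball_zero_iff] at hx; linarith))
      (fun x hx => hderiv x hx) (convex_ball _ _) (hmem b hb) (hmem a ha)
    have h8 : δ ≤ ε₀ * r / 32 := min_le_right _ _
    have h7 : 16 * δ / r ≤ ε₀/2 := by
      rw [div_le_iff₀ hrpos]
      nlinarith
    calc ‖w a - w b‖ ≤ 16*δ/r * ‖a - b‖ := h6
      _ ≤ ε₀/2 * ‖a - b‖ := mul_le_mul_of_nonneg_right h7 (norm_nonneg _)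
  have hgTLip : ∀ a ∈ closedBall (0:En n) (r/2), ∀ b ∈ closedBall (0:En n) (r/2),
      ‖(g a - T a) - (g b - T b)‖ ≤ ε₀ * ‖a - b‖ := by
    intro a ha b hb
    have h1 : (g a - T a) - (g b - T b) = (w a - w b) + (u a - u b) := by
      simp only [hw, hu, hTdef, ContinuousLinearMap.coe_coe]
      abel
    have hmem : ∀ y : En n, y ∈ closedBall (0:En n) (r/2) → y ∈ ball (0:En n) (s₀/2) := by
      intro y hy
      rw [mem_closedBall_zero_iff] at hy
      rw [mem_ball_zero_iff]
      linarith
    rw [h1]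
    calc ‖(w a - w b) + (u a - u b)‖ ≤ ‖w a - w b‖ + ‖u a - u b‖ := norm_add_le _ _
      _ ≤ ε₀/2 * ‖a - b‖ + ε₀/2 * ‖a - b‖ :=
          add_le_add (hwLip a ha b hb) (huLip a (hmem a ha) b (hmem b hb))
      _ = ε₀ * ‖a - b‖ := by ring
  have htele : ∀ y : En n, ‖y‖ ≤ r → (∀ k, k ≤ m → g^[k] y ∈ closedBall (0:En n) r) →
      ∀ j, j ≤ m → ‖f^[j] y - g^[j] y‖ ≤ (∑ i ∈ Finset.range j, L ^ i) * δ := by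
    intro y hyr hyorb j
    induction j with
    | zero =>
      intro _
      simp
    | succ j ih =>
      intro hj1
      have hj : j ≤ m := by omega
      have h2 := ih hj
      have hy2ρ : ‖y‖ < 2*ρ₁ := by linarith
      have hfj : f^[j] y ∈ ball (0:En n) (s₀/2) := horbmem y hy2ρ j hj
      have hgj : ‖g^[j] y‖ ≤ r := mem_closedBall_zero_iff.mp (hyorb j hj)
      have hgj' : g^[j] y ∈ ball (0:En n) (s₀/2) := by
        rw [mem_ball_zero_iff]
        linarith
      rw [Function.iterate_succ_apply', Function.iterate_succ_apply']
      have heq : f (f^[j] y) - g (g^[j] y)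
          = (f (f^[j] y) - f (g^[j] y)) + (f (g^[j] y) - g (g^[j] y)) := by abel
      have h5 : ‖f (f^[j] y) - f (g^[j] y)‖ ≤ L * ‖f^[j] y - g^[j] y‖ :=
        hfLip _ hfj _ hgj'
      have h6 : ‖f (g^[j] y) - g (g^[j] y)‖ ≤ δ := by
        rw [norm_sub_rev]
        exact hwsup (g^[j] y) hgj
      have hLS : 0 ≤ (∑ i ∈ Finset.range j, L ^ i) := by
        apply Finset.sum_nonneg
        intro i _
        positivity
      calc ‖f (f^[j] y) - g (g^[j] y)‖
          ≤ ‖f (f^[j] y) - f (g^[j] y)‖ + ‖f (g^[j] y) - g (g^[j] y)‖ := by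
            rw [heq]; exact norm_add_le _ _
        _ ≤ L * ((∑ i ∈ Finset.range j, L ^ i) * δ) + δ := by nlinarith
        _ = (∑ i ∈ Finset.range (j+1), L ^ i) * δ := by
            rw [geom_sum_succ]
            ring
  have hloc : ∀ y : En n, ‖y‖ ≤ r → (∀ k, k ≤ m → g^[k] y ∈ closedBall (0:En n) r) →
      g^[m] y = y → ‖y‖ < r/2 := by
    intro y hyr hyorb hfixy
    by_contra hcon
    push_neg at hcon
    have hyA : y ∈ Ann := by
      refine ⟨mem_closedBall_zero_iff.mpr hyr, ?_⟩
      intro hmem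
      rw [mem_ball_zero_iff] at hmem
      linarith
    have h1 := isMinOn_iff.mp hymin y hyA
    have h2 := htele y hyr hyorb m le_rfl
    rw [hfixy] at h2
    have h3 : δ ≤ c/(2*CL) := min_le_left _ _
    have h4 : CL * δ ≤ c/2 := by
      have hCL0 : CL ≠ 0 := ne_of_gt hCLpos
      calc CL * δ ≤ CL * (c/(2*CL)) := mul_le_mul_of_nonneg_left h3 (le_of_lt hCLpos)
        _ = c/2 := by
            rw [mul_comm CL (c/(2*CL)), div_mul_eq_mul_div,
              mul_div_mul_right c 2 hCL0]
    rw [← hCL] at h2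
    have h9 : c ≤ CL * δ := by
      calc c ≤ ‖f^[m] y - y‖ := h1
        _ ≤ CL * δ := h2
    linarith
  have hmain : ∀ q ∈ ball (0:En n) r, g^[m] q = q → g q = q := by
    intro q hq hgm
    have hqorb : ∀ k, k ≤ m → g^[k] q ∈ closedBall (0:En n) (r/2) := by
      intro k hk
      have hyr : g^[k] q ∈ closedBall (0:En n) r := horbg q hq k hk
      have hyorb : ∀ j, j ≤ m → g^[j] (g^[k] q) ∈ closedBall (0:En n) r := by
        intro j hj
        have h1 : g^[j] (g^[k] q) = g^[j+k] q := (Function.iterate_add_apply g j k q).symm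
        rcases le_or_gt (j+k) m with h | h
        · rw [h1]
          exact horbg q hq (j+k) h
        · have h2 : g^[j+k] q = g^[j+k-m] (g^[m] q) := by
            rw [← Function.iterate_add_apply]
            congr 1
            omega
          rw [h1, h2, hgm]
          exact horbg q hq (j+k-m) (by omega)
      have hym : g^[m] (g^[k] q) = g^[k] q := by
        rw [← Function.iterate_add_apply, add_comm, Function.iterate_add_apply, hgm]
      have h3 := hloc (g^[k] q) (mem_closedBall_zero_iff.mp hyr) hyorb hym
      exact mem_closedBall_zero_iff.mpr (le_of_lt h3)
    exact hKey g (closedBall (0:En n) (r/2)) hgTLip q hqorb hgm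
  have hsets : {x ∈ ball (0:En n) r | g x = x} = {x ∈ ball (0:En n) r | g^[m] x = x} := by
    ext x
    simp only [Set.mem_setOf_eq]
    constructor
    · rintro ⟨hx1, hx2⟩
      exact ⟨hx1, Function.iterate_fixed hx2 m⟩
    · rintro ⟨hx1, hx2⟩
      exact ⟨hx1, hmain x hx1 hx2⟩
  rw [hsets]
end
end
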